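/- arXiv:2211.12582 — 3 statements merged into one kernel-verified Lean document; each statement's English description precedes it below -/
import Mathlib

section
/- Let G be a graph on d+2 vertices that has a spherical representation in ℝ^d with distance ratio k, and let λ₂ be the second largest eigenvalue of the adjacency matrix A_G. Then λ₂ > 0 and k = √(1/λ₂ + 1). -/
open Matrix Finset
open scoped Classical

noncomputable section

/-- `p` realizes the graph `G` as a 2-distance set in `ℝ^d` with distance ratio `k`:
the larger distance `α₁` occurs exactly between adjacent vertices, the smaller
distance `α₂` between distinct non-adjacent vertices, both distances occur,
and `k = α₁ / α₂`. -/
def IsTwoDistRep (n d : ℕ) (G : SimpleGraph (Fin n)) (k : ℝ)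
    (p : Fin n → EuclideanSpace ℝ (Fin d)) : Prop :=
  ∃ α₁ α₂ : ℝ, α₂ < α₁ ∧ 0 < α₂ ∧ k = α₁ / α₂ ∧
    (∀ i j : Fin n, G.Adj i j → dist (p i) (p j) = α₁) ∧
    (∀ i j : Fin n, i ≠ j → ¬ G.Adj i j → dist (p i) (p j) = α₂) ∧
    (∃ i j : Fin n, G.Adj i j) ∧ (∃ i j : Fin n, i ≠ j ∧ ¬ G.Adj i j)

/-- `G` (a graph on `n` vertices) is representable in `ℝ^d` with ratio `k`. -/
def RepresentableWith (n d : ℕ) (G : SimpleGraph (Fin n)) (k : ℝ) : Prop :=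
  ∃ p : Fin n → EuclideanSpace ℝ (Fin d), IsTwoDistRep n d G k p

/-- `G` has a spherical representation in `ℝ^d` with ratio `k`. -/
def SphericalWith (n d : ℕ) (G : SimpleGraph (Fin n)) (k : ℝ) : Prop :=
  ∃ (p : Fin n → EuclideanSpace ℝ (Fin d)) (c : EuclideanSpace ℝ (Fin d)) (r : ℝ),
    IsTwoDistRep n d G k p ∧ ∀ i, dist (p i) c = r

/-- `G` has a spherical representation in `ℝ^d` (for some ratio). -/
def Spherical (n d : ℕ) (G : SimpleGraph (Fin n)) : Prop :=
  ∃ k : ℝ, SphericalWith n d G k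

/-- `G` is a complete multipartite graph: vertices can be classified so that two
vertices are adjacent exactly when they lie in different classes. -/
def IsCompleteMultipartite {n : ℕ} (G : SimpleGraph (Fin n)) : Prop :=
  ∃ f : Fin n → Fin n, ∀ i j : Fin n, G.Adj i j ↔ f i ≠ f j

/-- The matrix `B_G(k)`: zero diagonal, `-k²` at adjacent pairs, `-1` at
distinct non-adjacent pairs. -/
def BG {n : ℕ} (G : SimpleGraph (Fin n)) [DecidableRel G.Adj] (k : ℝ) :
    Matrix (Fin n) (Fin n) ℝ :=
  Matrix.of fun i j => if i = j then 0 else if G.Adj i j then -k ^ 2 else -1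

/-- The all-ones matrix `J`. -/
def Jmat (n : ℕ) : Matrix (Fin n) (Fin n) ℝ := Matrix.of fun _ _ => 1

/-- The orthogonal complement `𝟙^⊥` of the all-ones vector in `ℝ^n`. -/
def onePerp (n : ℕ) : Submodule ℝ (Fin n → ℝ) :=
  LinearMap.ker ((∑ i : Fin n, LinearMap.proj i : (Fin n → ℝ) →ₗ[ℝ] ℝ))


end

section AuxProofs
open Matrix Finset
open scoped RealInnerProductSpace

noncomputable section

variable {n : ℕ}

local instance {n : ℕ} : Coe (Fin n → ℝ) (EuclideanSpace ℝ (Fin n)) := ⟨WithLp.toLp 2⟩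

lemma dot_eq_inner (x y : EuclideanSpace ℝ (Fin n)) :
    (x : Fin n → ℝ) ⬝ᵥ (y : Fin n → ℝ) = ⟪x, y⟫ := by
  simp [dotProduct, PiLp.inner_apply, mul_comm]

lemma quad_expand {A : Matrix (Fin n) (Fin n) ℝ} (hA : A.IsHermitian)
    (w : EuclideanSpace ℝ (Fin n)) :
    (w : Fin n → ℝ) ⬝ᵥ (A *ᵥ w) =
      ∑ i, hA.eigenvalues i * (hA.eigenvectorBasis.repr w i)^2 := by
  set B := hA.eigenvectorBasis with hB
  have hw : w = ∑ i, B.repr w i • B i := (B.sum_repr w).symm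
  have hAw : A *ᵥ (w : Fin n → ℝ) = ∑ i, (B.repr w i * hA.eigenvalues i) • (B i : Fin n → ℝ) := by
    conv_lhs => rw [hw]
    have : ((∑ i, B.repr w i • B i : EuclideanSpace ℝ (Fin n)) : Fin n → ℝ)
        = ∑ i, B.repr w i • (B i : Fin n → ℝ) := by simp
    rw [this]
    have hmap := map_sum A.mulVecLin (fun i => B.repr w i • (B i : Fin n → ℝ)) Finset.univ
    have hmap2 : A *ᵥ (∑ i, B.repr w i • (B i : Fin n → ℝ))
        = ∑ i, A *ᵥ (B.repr w i • (B i : Fin n → ℝ)) := hmap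
    rw [hmap2]
    refine Finset.sum_congr rfl fun i _ => ?_
    have h2 : A *ᵥ (B i : Fin n → ℝ) = hA.eigenvalues i • (B i : Fin n → ℝ) :=
      hA.mulVec_eigenvectorBasis i
    rw [mulVec_smul, h2, smul_smul]
  calc (w : Fin n → ℝ) ⬝ᵥ (A *ᵥ w)
      = ⟪w, (∑ i, (B.repr w i * hA.eigenvalues i) • B i : EuclideanSpace ℝ (Fin n))⟫ := by
        rw [hAw, ← dot_eq_inner]; simp
    _ = ∑ i, (B.repr w i * hA.eigenvalues i) * ⟪w, B i⟫ := by
        rw [inner_sum]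
        exact Finset.sum_congr rfl fun i _ => real_inner_smul_right _ _ _
    _ = ∑ i, hA.eigenvalues i * (B.repr w i)^2 := by
        refine Finset.sum_congr rfl fun i _ => ?_
        rw [← real_inner_comm, ← B.repr_apply_apply]; ring

lemma norm_expand {A : Matrix (Fin n) (Fin n) ℝ} (hA : A.IsHermitian)
    (w : EuclideanSpace ℝ (Fin n)) :
    (w : Fin n → ℝ) ⬝ᵥ (w : Fin n → ℝ) = ∑ i, (hA.eigenvectorBasis.repr w i)^2 := by
  set B := hA.eigenvectorBasis with hB
  rw [dot_eq_inner]
  have := B.repr.inner_map_map w w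
  rw [← this, PiLp.inner_apply]
  simp [pow_two]

lemma repr_mulVec {A : Matrix (Fin n) (Fin n) ℝ} (hA : A.IsHermitian) (y : Fin n → ℝ) (j : Fin n) :
    hA.eigenvectorBasis.repr (A *ᵥ y) j = hA.eigenvalues j * hA.eigenvectorBasis.repr y j := by
  set B := hA.eigenvectorBasis with hB
  have h1 : B.repr (A *ᵥ y) j = ⟪(B j : EuclideanSpace ℝ (Fin n)), (A *ᵥ y : EuclideanSpace ℝ (Fin n))⟫ :=
    B.repr_apply_apply _ _
  have h2 : B.repr y j = ⟪(B j : EuclideanSpace ℝ (Fin n)), (y : EuclideanSpace ℝ (Fin n))⟫ :=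
    B.repr_apply_apply _ _
  rw [h1, h2, ← dot_eq_inner, ← dot_eq_inner]
  have hAT : Aᵀ = A := by
    rw [← conjTranspose_eq_transpose_of_trivial]; exact hA.eq
  have h3 : (B j : Fin n → ℝ) ⬝ᵥ (A *ᵥ y) = (A *ᵥ (B j : Fin n → ℝ)) ⬝ᵥ y := by
    rw [dotProduct_mulVec, ← mulVec_transpose, hAT]
  rw [h3]
  have h4 : A *ᵥ (B j : Fin n → ℝ) = hA.eigenvalues j • (B j : Fin n → ℝ) :=
    hA.mulVec_eigenvectorBasis j
  rw [h4, smul_dotProduct]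
  rfl
section seceig
variable {m : ℕ} {A : Matrix (Fin (m+2)) (Fin (m+2)) ℝ} (hA : A.IsHermitian)

-- Part 1: no "two eigenvalues above lam"
lemma part1 (lam : ℝ)
    (μ : Fin (m+2) → ℝ) (hmono : Antitone μ) (σ : Equiv.Perm (Fin (m+2)))
    (hμ : μ = hA.eigenvalues ∘ σ)
    (hb : ∀ y : Fin (m+2) → ℝ, ∑ i, y i = 0 → y ⬝ᵥ (A *ᵥ y) ≤ lam * (y ⬝ᵥ y)) :
    μ 1 ≤ lam := by
  by_contra hcon
  push_neg at hcon
  have h01 : (0 : Fin (m+2)) ≤ 1 := Fin.zero_le _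
  have hμ0 : lam < μ 0 := lt_of_lt_of_le hcon (hmono h01)
  set B := hA.eigenvectorBasis with hB
  set u : Fin (m+2) → ℝ := (B (σ 0) : Fin (m+2) → ℝ) with hu
  set v : Fin (m+2) → ℝ := (B (σ 1) : Fin (m+2) → ℝ) with hv
  have hAu : A *ᵥ u = μ 0 • u := by
    rw [hμ]; exact hA.mulVec_eigenvectorBasis (σ 0)
  have hAv : A *ᵥ v = μ 1 • v := by
    rw [hμ]; exact hA.mulVec_eigenvectorBasis (σ 1)
  have hne : σ 0 ≠ σ 1 := fun h => by
    have := σ.injective h; simp at this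
  have hortho := orthonormal_iff_ite.mp B.orthonormal
  have huu : u ⬝ᵥ u = 1 := by rw [hu, dot_eq_inner, hortho]; simp
  have hvv : v ⬝ᵥ v = 1 := by rw [hv, dot_eq_inner, hortho]; simp
  have huv : u ⬝ᵥ v = 0 := by rw [hu, hv, dot_eq_inner, hortho]; simp [hne]
  have hvu : v ⬝ᵥ u = 0 := by rw [hu, hv, dot_eq_inner, hortho]; simp [hne.symm]
  set s₀ : ℝ := ∑ i, u i with hs₀
  set s₁ : ℝ := ∑ i, v i with hs₁
  by_cases hc : s₀ = 0
  · have h2 : u ⬝ᵥ (A *ᵥ u) = μ 0 := by rw [hAu, dotProduct_smul, smul_eq_mul, huu, mul_one]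
    have h3 := hb u (by rw [← hs₀]; exact hc)
    rw [h2, huu, mul_one] at h3
    exact absurd h3 (not_le.mpr hμ0)
  --
  · set y : Fin (m+2) → ℝ := s₀ • v - s₁ • u with hy
    have hysum : ∑ i, y i = 0 := by
      rw [hy]
      simp only [Pi.sub_apply, Pi.smul_apply, smul_eq_mul]
      rw [Finset.sum_sub_distrib, ← Finset.mul_sum, ← Finset.mul_sum, ← hs₀, ← hs₁]
      ring
    have hAy : A *ᵥ y = s₀ • (μ 1 • v) - s₁ • (μ 0 • u) := by
      rw [hy, mulVec_sub, mulVec_smul, mulVec_smul, hAu, hAv]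
    have hyAy : y ⬝ᵥ (A *ᵥ y) = s₀^2 * μ 1 + s₁^2 * μ 0 := by
      rw [hAy, hy]
      simp only [sub_dotProduct, dotProduct_sub, smul_dotProduct, dotProduct_smul,
        smul_eq_mul, huu, hvv, huv, hvu]
      ring
    have hyy : y ⬝ᵥ y = s₀^2 + s₁^2 := by
      rw [hy]
      simp only [sub_dotProduct, dotProduct_sub, smul_dotProduct, dotProduct_smul,
        smul_eq_mul, huu, hvv, huv, hvu]
      ring
    have h3 := hb y hysum
    rw [hyAy, hyy] at h3
    have hs0 : 0 < s₀^2 := by positivity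
    nlinarith [sq_nonneg s₁]

lemma part2 (hpos : ∀ i j, 0 ≤ A i j) (lam : ℝ)
    (μ : Fin (m+2) → ℝ) (hmono : Antitone μ) (σ : Equiv.Perm (Fin (m+2)))
    (hμ : μ = hA.eigenvalues ∘ σ)
    (x : Fin (m+2) → ℝ) (hx0 : x ≠ 0) (hxs : ∑ i, x i = 0)
    (hxe : A *ᵥ x = lam • x) : lam ≤ μ 1 := by
  by_contra hcon
  push_neg at hcon
  set B := hA.eigenvectorBasis with hB
  set ev := hA.eigenvalues with hev
  -- all eigenvalues other than at index σ 0 are < lam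
  have hev_lt : ∀ j, j ≠ σ 0 → ev j < lam := by
    intro j hj
    have h1 : ev j = μ (σ.symm j) := by rw [hμ]; simp
    have hne : σ.symm j ≠ 0 := by
      intro h
      exact hj (by rw [← h]; simp)
    have h2 : (1 : Fin (m+2)) ≤ σ.symm j := by
      rw [Fin.le_def]
      have h3 : (σ.symm j).val ≠ 0 := fun h => hne (Fin.ext (by simpa using h))
      simp only [Fin.val_one]
      omega
    calc ev j = μ (σ.symm j) := h1
      _ ≤ μ 1 := hmono h2
      _ < lam := hcon
  -- coordinates of x in the eigenbasis
  have hcoord : ∀ j, (ev j - lam) * B.repr x j = 0 := by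
    intro j
    have h1 := repr_mulVec hA x j
    rw [hxe] at h1
    have h2 : B.repr (WithLp.toLp 2 (lam • x)) j = lam * B.repr x j := by
      rw [WithLp.toLp_smul, LinearIsometryEquiv.map_smul]
      simp
    rw [h2] at h1
    rw [sub_mul]
    rw [← hev] at h1
    linarith
  have hczero : ∀ j, j ≠ σ 0 → B.repr x j = 0 := by
    intro j hj
    have h1 := hcoord j
    have h2 : ev j - lam ≠ 0 := by have := hev_lt j hj; linarith
    exact (mul_eq_zero.mp h1).resolve_left h2
  have hc0 : B.repr x (σ 0) ≠ 0 := by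
    intro h0
    apply hx0
    have hz : B.repr x = 0 := by
      ext j
      by_cases hj : j = σ 0
      · rw [hj]; simpa using h0
      · simpa using hczero j hj
    have : (x : EuclideanSpace ℝ (Fin (m+2))) = 0 := by
      simpa using B.repr.map_eq_zero_iff.mp hz
    exact congrArg WithLp.ofLp this
  have hevs : ev (σ 0) = lam := by
    have h1 := hcoord (σ 0)
    rcases mul_eq_zero.mp h1 with h | h
    · linarith [sub_eq_zero.mp h]
    · exact absurd h hc0
  set v : Fin (m+2) → ℝ := (B (σ 0) : Fin (m+2) → ℝ) with hv
  have hAv : A *ᵥ v = lam • v := by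
    rw [hv, ← hevs]
    exact hA.mulVec_eigenvectorBasis (σ 0)
  -- x = c₀ • v
  have hxv : (x : EuclideanSpace ℝ (Fin (m+2))) = B.repr x (σ 0) • B (σ 0) := by
    conv_lhs => rw [← B.sum_repr x]
    refine Finset.sum_eq_single_of_mem (σ 0) (Finset.mem_univ _) ?_
    intro j _ hj
    rw [hczero j hj, zero_smul]
  have hxvi : ∀ i, x i = B.repr x (σ 0) * v i := by
    intro i
    have := congrArg (fun z : EuclideanSpace ℝ (Fin (m+2)) => z i) hxv
    simpa [hv] using this
  have hv0 : v ≠ 0 := by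
    intro h
    apply hx0
    funext i
    rw [hxvi i, h]
    simp
  have hvs : ∑ i, v i = 0 := by
    have h1 : ∑ i, x i = B.repr x (σ 0) * ∑ i, v i := by
      rw [Finset.mul_sum]
      exact Finset.sum_congr rfl fun i _ => hxvi i
    rw [hxs] at h1
    rcases mul_eq_zero.mp h1.symm with h | h
    · exact absurd h hc0
    · exact h
  -- the entrywise absolute value of v
  set w : Fin (m+2) → ℝ := fun i => |v i| with hw
  have hww : w ⬝ᵥ w = v ⬝ᵥ v := by
    simp [hw, dotProduct, abs_mul_abs_self]
  have hvAv : v ⬝ᵥ (A *ᵥ v) = lam * (v ⬝ᵥ v) := by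
    rw [hAv, dotProduct_smul, smul_eq_mul]
  have hmono2 : lam * (v ⬝ᵥ v) ≤ w ⬝ᵥ (A *ᵥ w) := by
    rw [← hvAv]
    simp only [dotProduct, mulVec, Finset.mul_sum]
    refine Finset.sum_le_sum fun i _ => Finset.sum_le_sum fun j _ => ?_
    have h1 : v i * v j ≤ |v i * v j| := le_abs_self _
    have h2 : |v i * v j| = |v i| * |v j| := abs_mul _ _
    have h3 := hpos i j
    have : A i j * (v i * v j) ≤ A i j * (|v i| * |v j|) := by
      apply mul_le_mul_of_nonneg_left _ h3
      rw [← h2]; exact h1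
    calc v i * (A i j * v j) = A i j * (v i * v j) := by ring
      _ ≤ A i j * (|v i| * |v j|) := this
      _ = w i * (A i j * w j) := by rw [hw]; ring
  -- expand w in the eigenbasis
  have hq := quad_expand hA w
  have hn := norm_expand hA w
  have hsum : 0 ≤ ∑ j, (ev j - lam) * (B.repr w j)^2 := by
    have h1 : w ⬝ᵥ (A *ᵥ w) = ∑ j, ev j * (B.repr w j)^2 := hq
    have h2 : w ⬝ᵥ w = ∑ j, (B.repr w j)^2 := hn
    have h3 : lam * (w ⬝ᵥ w) ≤ w ⬝ᵥ (A *ᵥ w) := by rw [hww]; exact hmono2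
    rw [h1, h2, Finset.mul_sum] at h3
    have e : ∑ j, (ev j - lam) * (B.repr w j)^2
        = (∑ j, ev j * (B.repr w j)^2) - ∑ j, lam * (B.repr w j)^2 := by
      rw [← Finset.sum_sub_distrib]
      exact Finset.sum_congr rfl fun j _ => by ring
    rw [e]
    linarith
  have hterm : ∀ j ∈ Finset.univ, (ev j - lam) * (B.repr w j)^2 ≤ 0 := by
    intro j _
    by_cases hj : j = σ 0
    · rw [hj, hevs]; simp
    · have := hev_lt j hj
      have h2 : ev j - lam ≤ 0 := by linarith
      exact mul_nonpos_of_nonpos_of_nonneg h2 (sq_nonneg _)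
  have hzero : ∀ j ∈ Finset.univ, (ev j - lam) * (B.repr w j)^2 = 0 := by
    rw [← Finset.sum_eq_zero_iff_of_nonpos hterm]
    exact le_antisymm (Finset.sum_nonpos hterm) hsum
  have hdzero : ∀ j, j ≠ σ 0 → B.repr w j = 0 := by
    intro j hj
    have h1 := hzero j (Finset.mem_univ j)
    have h2 : ev j - lam ≠ 0 := by have := hev_lt j hj; linarith
    have := (mul_eq_zero.mp h1).resolve_left h2
    exact pow_eq_zero_iff (by norm_num) |>.mp this
  -- w = d₀ • v
  have hwv : (w : EuclideanSpace ℝ (Fin (m+2))) = B.repr w (σ 0) • B (σ 0) := by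
    conv_lhs => rw [← B.sum_repr w]
    refine Finset.sum_eq_single_of_mem (σ 0) (Finset.mem_univ _) ?_
    intro j _ hj
    rw [hdzero j hj, zero_smul]
  have hwvi : ∀ i, |v i| = B.repr w (σ 0) * v i := by
    intro i
    have := congrArg (fun z : EuclideanSpace ℝ (Fin (m+2)) => z i) hwv
    simpa [hv, hw] using this
  -- v has a positive and a negative entry: contradiction
  have hvpos : ∃ i, 0 < v i := by
    by_contra h
    push_neg at h
    apply hv0
    funext i
    exact Finset.sum_eq_zero_iff_of_nonpos (fun i _ => h i) |>.mp hvs i (Finset.mem_univ i)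
  have hvneg : ∃ i, v i < 0 := by
    by_contra h
    push_neg at h
    apply hv0
    funext i
    exact Finset.sum_eq_zero_iff_of_nonneg (fun i _ => h i) |>.mp hvs i (Finset.mem_univ i)
  obtain ⟨i, hi⟩ := hvpos
  obtain ⟨j, hj⟩ := hvneg
  have h1 : B.repr w (σ 0) = 1 := by
    have h0 := hwvi i
    rw [abs_of_pos hi] at h0
    have h3 : (B.repr w (σ 0) - 1) * v i = 0 := by linarith
    rcases mul_eq_zero.mp h3 with h | h
    · linarith
    · exact absurd h (ne_of_gt hi)
  have h2 : B.repr w (σ 0) = -1 := by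
    have h0 := hwvi j
    rw [abs_of_neg hj] at h0
    have h3 : (B.repr w (σ 0) + 1) * v j = 0 := by linarith
    rcases mul_eq_zero.mp h3 with h | h
    · linarith
    · exact absurd h (ne_of_lt hj)
  rw [h1] at h2
  norm_num at h2

end seceig


private theorem geomRep (d : ℕ) (G : SimpleGraph (Fin (d+2))) [DecidableRel G.Adj]
    (k : ℝ)
    (p : Fin (d+2) → EuclideanSpace ℝ (Fin d)) (c : EuclideanSpace ℝ (Fin d)) (r : ℝ)
    (α₁ α₂ : ℝ) (hlt : α₂ < α₁) (hα₂ : 0 < α₂) (hk : k = α₁ / α₂)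
    (hadj : ∀ i j, G.Adj i j → dist (p i) (p j) = α₁)
    (hnadj : ∀ i j, i ≠ j → ¬ G.Adj i j → dist (p i) (p j) = α₂)
    (hsphere : ∀ i, dist (p i) c = r) :
    1 < k ∧
    (∃ x : Fin (d+2) → ℝ, x ≠ 0 ∧ ∑ i, x i = 0 ∧
      (G.adjMatrix ℝ) *ᵥ x = (k^2-1)⁻¹ • x) ∧
    (∀ y : Fin (d+2) → ℝ, ∑ i, y i = 0 →
      y ⬝ᵥ ((G.adjMatrix ℝ) *ᵥ y) ≤ (k^2-1)⁻¹ * (y ⬝ᵥ y)) := by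
  set A := G.adjMatrix ℝ with hAdef
  have hk1 : 1 < k := by rw [hk]; exact (one_lt_div hα₂).mpr hlt
  have hk0 : 0 < k := lt_trans one_pos hk1
  have hkk : 0 < k^2 - 1 := by nlinarith
  have hα₁ : α₁ = k * α₂ := by rw [hk]; field_simp
  set q : Fin (d+2) → EuclideanSpace ℝ (Fin d) := fun i => p i - c with hq
  have hqn : ∀ i, ‖q i‖ = r := fun i => by rw [hq, ← dist_eq_norm]; exact hsphere i
  have hinner : ∀ i j, ⟪q i, q j⟫ = r^2 - dist (p i) (p j)^2 / 2 := by
    intro i j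
    have h1 : q i - q j = p i - p j := sub_sub_sub_cancel_right _ _ _
    have h2 : dist (p i) (p j)^2 = ‖q i - q j‖^2 := by rw [h1, ← dist_eq_norm]
    rw [norm_sub_sq_real, hqn, hqn] at h2
    linarith
  have hd2 : ∀ i j, dist (p i) (p j)^2
      = α₂^2 * ((if i = j then (0:ℝ) else 1) + (k^2 - 1) * A i j) := by
    intro i j
    by_cases hij : i = j
    · subst hij
      simp [hAdef, dist_self]
    · by_cases ha : G.Adj i j
      · rw [hadj i j ha, hα₁]
        simp [hAdef, hij, ha]
        ring
      · rw [hnadj i j hij ha]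
        simp [hAdef, hij, ha]
  have hkey : ∀ z : Fin (d+2) → ℝ, ∑ i, z i = 0 → ∀ i,
      ⟪q i, ∑ j, z j • q j⟫ = (α₂^2/2) * (z i - (k^2-1) * (A *ᵥ z) i) := by
    intro z hz i
    rw [inner_sum]
    have e1 : ∀ j, ⟪q i, z j • q j⟫ = z j * (r^2 - dist (p i) (p j)^2/2) := fun j => by
      rw [real_inner_smul_right, hinner]
    rw [Finset.sum_congr rfl fun j _ => e1 j]
    have e2 : ∑ j, z j * (r^2 - dist (p i) (p j)^2/2)
        = r^2 * (∑ j, z j) - (1/2) * ∑ j, z j * dist (p i) (p j)^2 := by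
      rw [Finset.mul_sum, Finset.mul_sum, ← Finset.sum_sub_distrib]
      exact Finset.sum_congr rfl fun j _ => by ring
    rw [e2, hz]
    have e4 : ∀ j, z j * dist (p i) (p j)^2
        = α₂^2 * (z j - (if i = j then z j else 0)) + (α₂^2 * (k^2-1)) * (A i j * z j) := by
      intro j
      rw [hd2 i j]
      by_cases hij : i = j
      · simp [hij]
        ring
      · simp [hij]
        ring
    have e3 : ∑ j, z j * dist (p i) (p j)^2
        = α₂^2 * (0 - z i) + (α₂^2 * (k^2-1)) * (A *ᵥ z) i := by
      rw [Finset.sum_congr rfl fun j _ => e4 j, Finset.sum_add_distrib]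
      congr 1
      · rw [← Finset.mul_sum, Finset.sum_sub_distrib, hz, Finset.sum_ite_eq]
        simp
      · rw [← Finset.mul_sum]
        congr 1
    rw [e3]
    ring
  refine ⟨hk1, ?_, ?_⟩
  · -- the eigenvector
    set f₁ : (Fin (d+2) → ℝ) →ₗ[ℝ] EuclideanSpace ℝ (Fin d) :=
      ∑ i, LinearMap.smulRight (LinearMap.proj i) (q i) with hf₁
    set f₂ : (Fin (d+2) → ℝ) →ₗ[ℝ] ℝ := ∑ i, LinearMap.proj i with hf₂
    set L := f₁.prod f₂ with hL
    have hker : ∃ x : Fin (d+2) → ℝ, x ≠ 0 ∧ L x = 0 := by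
      by_contra h
      push_neg at h
      have hinj : Function.Injective L := by
        rw [← LinearMap.ker_eq_bot]
        rw [Submodule.eq_bot_iff]
        intro x hx
        by_contra hx0
        exact h x hx0 hx
      have hle := LinearMap.finrank_le_finrank_of_injective hinj
      have h1 : Module.finrank ℝ (Fin (d+2) → ℝ) = d + 2 := by
        simp [Module.finrank_pi]
      have h2 : Module.finrank ℝ (EuclideanSpace ℝ (Fin d) × ℝ) = d + 1 := by
        rw [Module.finrank_prod, finrank_euclideanSpace_fin, Module.finrank_self]
      omega
    obtain ⟨x, hx0, hLx⟩ := hker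
    have hq0 : ∑ i, x i • q i = 0 := by
      have := congrArg Prod.fst hLx
      simpa [hL, hf₁, LinearMap.prod_apply, LinearMap.sum_apply] using this
    have hxs : ∑ i, x i = 0 := by
      have := congrArg Prod.snd hLx
      simpa [hL, hf₂, LinearMap.prod_apply, LinearMap.sum_apply] using this
    refine ⟨x, hx0, hxs, ?_⟩
    funext i
    have h1 := hkey x hxs i
    rw [hq0, inner_zero_right] at h1
    have h2 : α₂^2/2 ≠ 0 := by positivity
    have h3 : x i - (k^2-1) * (A *ᵥ x) i = 0 := by
      rcases mul_eq_zero.mp h1.symm with h | h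
      · exact absurd h h2
      · exact h
    have h4 : (A *ᵥ x) i = (k^2-1)⁻¹ * x i := by
      field_simp
      linarith
    rw [h4]
    simp
  · -- the quadratic bound
    intro y hy
    have h0 : (0:ℝ) ≤ ⟪∑ j, y j • q j, ∑ j, y j • q j⟫ := real_inner_self_nonneg
    have h1 : ⟪(∑ j, y j • q j : EuclideanSpace ℝ (Fin d)), ∑ j, y j • q j⟫
        = ∑ i, y i * ((α₂^2/2) * (y i - (k^2-1) * (A *ᵥ y) i)) := by
      rw [sum_inner]
      refine Finset.sum_congr rfl fun i _ => ?_
      rw [real_inner_smul_left, hkey y hy i]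
    have h2 : ∑ i, y i * ((α₂^2/2) * (y i - (k^2-1) * (A *ᵥ y) i))
        = (α₂^2/2) * ((y ⬝ᵥ y) - (k^2-1) * (y ⬝ᵥ (A *ᵥ y))) := by
      have hyy : y ⬝ᵥ y = ∑ i, y i * y i := rfl
      have hyAy : y ⬝ᵥ (A *ᵥ y) = ∑ i, y i * (A *ᵥ y) i := rfl
      rw [hyy, hyAy, mul_sub, ← mul_assoc, Finset.mul_sum, Finset.mul_sum,
        ← Finset.sum_sub_distrib]
      exact Finset.sum_congr rfl fun i _ => by ring
    rw [h1, h2] at h0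
    have hc : (0:ℝ) < α₂^2/2 := by positivity
    have h3 : (k^2-1) * (y ⬝ᵥ (A *ᵥ y)) ≤ y ⬝ᵥ y := by nlinarith
    rw [inv_mul_eq_div, le_div_iff₀ hkk]
    linarith


private lemma adjMatrix_entry_nonneg (d : ℕ) (G : SimpleGraph (Fin (d+2)))
    [DecidableRel G.Adj] (i j : Fin (d+2)) : (0:ℝ) ≤ (G.adjMatrix ℝ) i j := by
  rw [SimpleGraph.adjMatrix_apply]
  split_ifs <;> norm_num

end
end AuxProofs

/-- **Corollary 8.** If `G` on `d+2` vertices has a spherical representation in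
`ℝ^d` with distance ratio `k`, then `λ₂ > 0` and `k = √(1/λ₂ + 1)`. -/
theorem stmt10 (d : ℕ) (G : SimpleGraph (Fin (d+2))) [DecidableRel G.Adj]
    (k : ℝ) (hsph : SphericalWith (d+2) d G k)
    (hA : (G.adjMatrix ℝ).IsHermitian)
    (μ : Fin (d+2) → ℝ) (hmono : Antitone μ)
    (hperm : ∃ σ : Equiv.Perm (Fin (d+2)), μ = hA.eigenvalues ∘ σ) :
    0 < μ 1 ∧ k = Real.sqrt (1 / μ 1 + 1) := by
  obtain ⟨σ, hμσ⟩ := hperm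
  obtain ⟨p, c, r, ⟨α₁, α₂, hlt, hα₂, hk, hadj, hnadj, _, _⟩, hsphere⟩ := hsph
  obtain ⟨hk1, ⟨x, hx0, hxs, hxe⟩, hb⟩ :=
    geomRep d G k p c r α₁ α₂ hlt hα₂ hk hadj hnadj hsphere
  have hk0 : 0 < k := lt_trans one_pos hk1
  have hkk : (0:ℝ) < k^2 - 1 := by nlinarith
  have h1 : μ 1 ≤ (k^2-1)⁻¹ :=
    part1 hA ((k^2-1)⁻¹) μ hmono σ hμσ hb
  have h2 : (k^2-1)⁻¹ ≤ μ 1 :=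
    part2 hA (adjMatrix_entry_nonneg d G) ((k^2-1)⁻¹) μ hmono σ hμσ x hx0 hxs hxe
  have hμ1 : μ 1 = (k^2-1)⁻¹ := le_antisymm h1 h2
  constructor
  · rw [hμ1]
    exact inv_pos.mpr hkk
  · rw [hμ1]
    have he : 1/((k^2-1)⁻¹) + 1 = k^2 := by
      rw [one_div, inv_inv]
      ring
    rw [he, Real.sqrt_sq hk0.le]
end

section
/- Let G be a graph on d+2 vertices, let k > 1, and set B̄ = (1/(k²−1))·I − A_G. Suppose that: (1̄) wᵀ·B̄·w ≥ 0 for every w ∈ 𝟙^⊥; (2̄) there exists a nonzero w ∈ 𝟙^⊥ and a real γ with B̄·w = γ·𝟙; and (3̄) det(B̄) = 0. Then A_G has an eigenvector with eigenvalue λ₂ (the second largest eigenvalue of A_G) that is orthogonal to the all-ones vector 𝟙. -/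
open Matrix Finset
open scoped Classical

/-- **Lemma 9.** If `B̄ = (1/(k²-1))·I - A_G` satisfies conditions (1̄), (2̄),
(3̄), then `A_G` has an eigenvector with eigenvalue `λ₂` orthogonal to `𝟙`. -/
theorem stmt11 (d : ℕ) (G : SimpleGraph (Fin (d+2))) [DecidableRel G.Adj]
    (k : ℝ) (hk : 1 < k)
    (hA : (G.adjMatrix ℝ).IsHermitian)
    (μ : Fin (d+2) → ℝ) (hmono : Antitone μ)
    (hperm : ∃ σ : Equiv.Perm (Fin (d+2)), μ = hA.eigenvalues ∘ σ)
    (Bbar : Matrix (Fin (d+2)) (Fin (d+2)) ℝ)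
    (hB : Bbar = (k ^ 2 - 1)⁻¹ • (1 : Matrix (Fin (d+2)) (Fin (d+2)) ℝ)
        - G.adjMatrix ℝ)
    (h1 : ∀ w : Fin (d+2) → ℝ, (∑ i, w i) = 0 → 0 ≤ w ⬝ᵥ Bbar.mulVec w)
    (h2 : ∃ w : Fin (d+2) → ℝ, w ≠ 0 ∧ (∑ i, w i) = 0 ∧
      ∃ γ : ℝ, Bbar.mulVec w = fun _ => γ)
    (h3 : Bbar.det = 0) :
    ∃ v : Fin (d+2) → ℝ, v ≠ 0 ∧ (G.adjMatrix ℝ).mulVec v = μ 1 • v ∧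
      (∑ i, v i) = 0 := by
  obtain ⟨σ, hσ⟩ := hperm
  set A : Matrix (Fin (d+2)) (Fin (d+2)) ℝ := G.adjMatrix ℝ with hAdef
  set c : ℝ := (k ^ 2 - 1)⁻¹ with hcdef
  -- symmetry facts
  have hAsymm : Aᵀ = A := (SimpleGraph.isSymm_adjMatrix G)
  have hBsymm : Bbarᵀ = Bbar := by
    rw [hB]; simp [transpose_sub, transpose_smul, transpose_one, hAsymm]
  have hdotA : ∀ x y : Fin (d+2) → ℝ, x ⬝ᵥ A *ᵥ y = (A *ᵥ x) ⬝ᵥ y := by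
    intro x y
    rw [dotProduct_mulVec, ← mulVec_transpose, hAsymm]
  have hdotB : ∀ x y : Fin (d+2) → ℝ, x ⬝ᵥ Bbar *ᵥ y = (Bbar *ᵥ x) ⬝ᵥ y := by
    intro x y
    rw [dotProduct_mulVec, ← mulVec_transpose, hBsymm]
  -- Bbar action
  have hBmul : ∀ x : Fin (d+2) → ℝ, Bbar *ᵥ x = c • x - A *ᵥ x := by
    intro x
    rw [hB, sub_mulVec, smul_mulVec, one_mulVec]
  -- Step B: produce kernel vector orthogonal to 1
  obtain ⟨v, hv0, hvB, hvsum⟩ :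
      ∃ v : Fin (d+2) → ℝ, v ≠ 0 ∧ Bbar *ᵥ v = 0 ∧ ∑ i, v i = 0 := by
    obtain ⟨w, hw0, hwsum, γ, hwB⟩ := h2
    by_cases hγ : γ = 0
    · exact ⟨w, hw0, by rw [hwB, hγ]; rfl, hwsum⟩
    · obtain ⟨v, hv0, hvB⟩ := (Matrix.exists_mulVec_eq_zero_iff).mpr h3
      refine ⟨v, hv0, hvB, ?_⟩
      have e1 : (Bbar *ᵥ w) ⬝ᵥ v = γ * ∑ i, v i := by
        rw [hwB]; simp [dotProduct, mul_sum]
      have e2 : (Bbar *ᵥ w) ⬝ᵥ v = 0 := by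
        rw [← hdotB w v, hvB]
        simp
      have := e1.symm.trans e2
      rcases mul_eq_zero.mp this with h | h
      · exact absurd h hγ
      · exact h
  have hAv : A *ᵥ v = c • v := by
    have h := hBmul v
    rw [hvB] at h
    exact (sub_eq_zero.mp h.symm).symm
  -- eigenbasis setup
  set u : Fin (d+2) → (Fin (d+2) → ℝ) :=
    fun i => (hA.eigenvectorBasis i : Fin (d+2) → ℝ) with hudef
  set lam : Fin (d+2) → ℝ := hA.eigenvalues with hlamdef
  have hAu : ∀ i, A *ᵥ u i = lam i • u i := fun i => hA.mulVec_eigenvectorBasis i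
  have huu : ∀ i j, u i ⬝ᵥ u j = if i = j then 1 else 0 := by
    intro i j
    have h := orthonormal_iff_ite.mp hA.eigenvectorBasis.orthonormal i j
    simp only [PiLp.inner_apply, RCLike.inner_apply, conj_trivial] at h
    rw [← h, hudef, dotProduct]
    exact Finset.sum_congr rfl fun k _ => mul_comm _ _
  have hrepr : ∀ x : Fin (d+2) → ℝ, ∑ i, (u i ⬝ᵥ x) • u i = x := by
    intro x
    have h := hA.eigenvectorBasis.sum_repr' (WithLp.toLp 2 x)
    simpa [hudef, PiLp.inner_apply, RCLike.inner_apply, dotProduct, mul_comm] using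
      congrArg (fun y : EuclideanSpace ℝ (Fin (d+2)) => (y : Fin (d+2) → ℝ)) h
  have hμs : ∀ i, lam i = μ (σ.symm i) := by
    intro i; rw [hσ]; simp
  have hμ : ∀ m, μ m = lam (σ m) := by
    intro m; rw [hσ]; simp
  -- eigen-equation in coordinates
  have heig : ∀ i, lam i * (u i ⬝ᵥ v) = c * (u i ⬝ᵥ v) := by
    intro i
    have e1 : u i ⬝ᵥ A *ᵥ v = c * (u i ⬝ᵥ v) := by
      rw [hAv, dotProduct_smul]; simp
    have e2 : u i ⬝ᵥ A *ᵥ v = lam i * (u i ⬝ᵥ v) := by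
      rw [hdotA, hAu, smul_dotProduct]; simp
    rw [← e1, e2]
  have hex : ∃ i, u i ⬝ᵥ v ≠ 0 := by
    by_contra hall
    push_neg at hall
    apply hv0
    have := hrepr v
    rw [← this]
    exact Finset.sum_eq_zero fun i _ => by rw [hall i, zero_smul]
  have hdsum : ∀ (x : Fin (d+2) → ℝ) (f : Fin (d+2) → (Fin (d+2) → ℝ)),
      x ⬝ᵥ (∑ i, f i) = ∑ i, x ⬝ᵥ f i := by
    intro x f
    simp only [dotProduct, Finset.sum_apply, Finset.mul_sum]
    exact Finset.sum_comm
  have hsumd : ∀ (x : Fin (d+2) → ℝ) (f : Fin (d+2) → (Fin (d+2) → ℝ)),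
      (∑ i, f i) ⬝ᵥ x = ∑ i, f i ⬝ᵥ x := by
    intro x f
    simp only [dotProduct, Finset.sum_apply, Finset.sum_mul]
    exact Finset.sum_comm
  -- quadratic form in coordinates
  have hquad : ∀ x : Fin (d+2) → ℝ,
      x ⬝ᵥ A *ᵥ x = ∑ i, lam i * (u i ⬝ᵥ x)^2 := by
    intro x
    have hAx : A *ᵥ x = ∑ i, ((u i ⬝ᵥ x) * lam i) • u i := by
      conv_lhs => rw [← hrepr x]
      rw [← Matrix.mulVecLin_apply, _root_.map_sum]
      refine Finset.sum_congr rfl fun i _ => ?_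
      rw [LinearMap.map_smul, Matrix.mulVecLin_apply, hAu, smul_smul]
    rw [hAx, hdsum]
    refine Finset.sum_congr rfl fun i _ => ?_
    rw [dotProduct_smul, smul_eq_mul, dotProduct_comm]
    ring
  have hnorm : ∀ x : Fin (d+2) → ℝ, x ⬝ᵥ x = ∑ i, (u i ⬝ᵥ x)^2 := by
    intro x
    calc x ⬝ᵥ x = (∑ i, (u i ⬝ᵥ x) • u i) ⬝ᵥ x := by rw [hrepr x]
    _ = ∑ i, (u i ⬝ᵥ x)^2 := by
        rw [hsumd]
        refine Finset.sum_congr rfl fun i _ => ?_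
        rw [smul_dotProduct, smul_eq_mul]
        ring
  -- Step (iii): μ 1 ≤ c
  have hle : μ 1 ≤ c := by
    by_contra hlt
    push_neg at hlt
    have h01 : (0 : Fin (d+2)) ≠ 1 := by
      simp [Fin.ext_iff]
    have hμ0 : c < μ 0 := lt_of_lt_of_le hlt (hmono (Fin.zero_le _))
    have hj : σ 0 ≠ σ 1 := fun h => h01 (σ.injective h)
    set s0 : ℝ := ∑ i, u (σ 0) i with hs0
    set s1 : ℝ := ∑ i, u (σ 1) i with hs1
    obtain ⟨a, b, hab, habs⟩ :
        ∃ a b : ℝ, ¬(a = 0 ∧ b = 0) ∧ a * s0 + b * s1 = 0 := by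
      by_cases h : s0 = 0 ∧ s1 = 0
      · exact ⟨1, 0, by simp, by simp [h.1, h.2]⟩
      · refine ⟨s1, -s0, fun hc => h ⟨?_, hc.1⟩, by ring⟩
        simpa using hc.2
    set x : Fin (d+2) → ℝ := a • u (σ 0) + b • u (σ 1) with hx
    have hxsum : ∑ i, x i = 0 := by
      simp only [hx, Pi.add_apply, Pi.smul_apply, smul_eq_mul]
      rw [Finset.sum_add_distrib, ← Finset.mul_sum, ← Finset.mul_sum]
      exact habs
    have hx1 := h1 x hxsum
    have hBu : ∀ j, Bbar *ᵥ u j = (c - lam j) • u j := by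
      intro j
      rw [hBmul, hAu, sub_smul]
    have hBx : Bbar *ᵥ x = (a * (c - lam (σ 0))) • u (σ 0)
        + (b * (c - lam (σ 1))) • u (σ 1) := by
      rw [hx, mulVec_add, mulVec_smul, mulVec_smul, hBu, hBu,
        smul_smul, smul_smul]
    have hval : x ⬝ᵥ Bbar *ᵥ x
        = a^2 * (c - lam (σ 0)) + b^2 * (c - lam (σ 1)) := by
      rw [hBx, hx]
      simp only [add_dotProduct, dotProduct_add, smul_dotProduct,
        dotProduct_smul, huu, smul_eq_mul]
      simp only [if_pos rfl, if_neg hj, if_neg hj.symm, if_true]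
      ring
    have hl0 : lam (σ 0) = μ 0 := (hμ 0).symm
    have hl1 : lam (σ 1) = μ 1 := (hμ 1).symm
    rw [hval, hl0, hl1] at hx1
    have hane : a ≠ 0 ∨ b ≠ 0 := by tauto
    rcases hane with ha | hb
    · nlinarith [sq_nonneg a, sq_nonneg b, sq_pos_of_ne_zero ha]
    · nlinarith [sq_nonneg a, sq_nonneg b, sq_pos_of_ne_zero hb]
  -- Step (iv): c ≤ μ 1
  have hge : c ≤ μ 1 := by
    by_contra hlt
    push_neg at hlt
    -- c is the top eigenvalue μ 0
    obtain ⟨i0, hi0⟩ := hex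
    have hlami0 : lam i0 = c := mul_right_cancel₀ hi0 (heig i0)
    have hone_le : ∀ m : Fin (d+2), m ≠ 0 → μ m ≤ μ 1 := by
      intro m hm
      refine hmono ?_
      have : (0 : Fin (d+2)) < m := Fin.pos_of_ne_zero hm
      exact this
    have hm0 : σ.symm i0 = 0 := by
      by_contra hne
      have := hone_le _ hne
      rw [← hμs i0, hlami0] at this
      linarith
    have hc0 : μ 0 = c := by rw [← hm0, ← hμs i0, hlami0]
    have hlamle : ∀ i, lam i ≤ c := by
      intro i
      rw [hμs i, ← hc0]
      exact hmono (Fin.zero_le _)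
    have hlameq : ∀ i, i ≠ σ 0 → lam i < c := by
      intro i hne
      rcases lt_or_eq_of_le (hlamle i) with h | h
      · exact h
      · exfalso
        have hsne : σ.symm i ≠ 0 := by
          intro h0
          apply hne
          rw [← h0, Equiv.apply_symm_apply]
        have := hone_le _ hsne
        rw [← hμs i, h] at this
        linarith
    -- absolute value vector
    set av : Fin (d+2) → ℝ := fun i => |v i| with hav
    have havv : av ⬝ᵥ av = v ⬝ᵥ v := by
      simp [dotProduct, hav, abs_mul_abs_self]
    have hAnn : ∀ i j, 0 ≤ A i j := by
      intro i j
      rw [hAdef]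
      by_cases h : G.Adj i j <;> simp [h]
    have hineq : v ⬝ᵥ A *ᵥ v ≤ av ⬝ᵥ A *ᵥ av := by
      simp only [dotProduct, mulVec, dotProduct, Finset.mul_sum]
      refine Finset.sum_le_sum fun i _ => Finset.sum_le_sum fun j _ => ?_
      have h1 : v i * (A i j * v j) ≤ A i j * |v i * v j| := by
        calc v i * (A i j * v j) = A i j * (v i * v j) := by ring
        _ ≤ A i j * |v i * v j| := mul_le_mul_of_nonneg_left (le_abs_self _) (hAnn i j)
      have h2 : A i j * |v i * v j| = av i * (A i j * av j) := by
        rw [hav]; simp only [abs_mul]; ring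
      linarith
    -- coordinates of av
    set s : Fin (d+2) → ℝ := fun i => u i ⬝ᵥ av with hs
    have hkey : ∑ i, (c - lam i) * (s i)^2 ≤ 0 := by
      have e1 : av ⬝ᵥ A *ᵥ av = ∑ i, lam i * (s i)^2 := hquad av
      have e2 : av ⬝ᵥ av = ∑ i, (s i)^2 := hnorm av
      have e3 : v ⬝ᵥ A *ᵥ v = c * (v ⬝ᵥ v) := by
        rw [hAv, dotProduct_smul, smul_eq_mul]
      have e4 : c * (∑ i, (s i)^2) ≤ ∑ i, lam i * (s i)^2 := by
        rw [← e1, ← e2, havv, ← e3]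
        exact hineq
      have : ∑ i, (c - lam i) * (s i)^2
          = c * (∑ i, (s i)^2) - ∑ i, lam i * (s i)^2 := by
        rw [Finset.mul_sum, ← Finset.sum_sub_distrib]
        exact Finset.sum_congr rfl fun i _ => by ring
      rw [this]
      linarith
    have hterm : ∀ i ∈ Finset.univ, (0:ℝ) ≤ (c - lam i) * (s i)^2 := by
      intro i _
      exact mul_nonneg (by linarith [hlamle i]) (sq_nonneg _)
    have hzero : ∀ i ∈ Finset.univ, (c - lam i) * (s i)^2 = 0 := by
      rw [← Finset.sum_eq_zero_iff_of_nonneg hterm]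
      exact le_antisymm hkey (Finset.sum_nonneg hterm)
    have hs0 : ∀ i, i ≠ σ 0 → s i = 0 := by
      intro i hne
      have h := hzero i (Finset.mem_univ i)
      rcases mul_eq_zero.mp h with h | h
      · exact absurd (by linarith [hlameq i hne] : False) not_false
      · exact pow_eq_zero_iff (by norm_num) |>.mp h
    have ht0 : ∀ i, i ≠ σ 0 → u i ⬝ᵥ v = 0 := by
      intro i hne
      have h := heig i
      have hne' : lam i ≠ c := ne_of_lt (hlameq i hne)
      by_contra hti
      exact hne' (mul_right_cancel₀ hti h)
    -- v and av are multiples of u (σ 0)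
    have hvrep : v = (u (σ 0) ⬝ᵥ v) • u (σ 0) := by
      conv_lhs => rw [← hrepr v]
      rw [Finset.sum_eq_single (σ 0)]
      · intro i _ hne
        rw [ht0 i hne, zero_smul]
      · intro h
        exact absurd (Finset.mem_univ _) h
    have havrep : av = s (σ 0) • u (σ 0) := by
      conv_lhs => rw [← hrepr av]
      rw [Finset.sum_eq_single (σ 0)]
      · intro i _ hne
        have h : u i ⬝ᵥ av = 0 := hs0 i hne
        rw [h, zero_smul]
      · intro h
        exact absurd (Finset.mem_univ _) h
    have htne : u (σ 0) ⬝ᵥ v ≠ 0 := by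
      intro h
      apply hv0
      rw [hvrep, h, zero_smul]
    have husum : ∑ i, u (σ 0) i = 0 := by
      have h := hvsum
      rw [hvrep] at h
      simp only [Pi.smul_apply, smul_eq_mul, ← Finset.mul_sum] at h
      rcases mul_eq_zero.mp h with h | h
      · exact absurd h htne
      · exact h
    have havsum : ∑ i, av i = 0 := by
      rw [havrep]
      simp only [Pi.smul_apply, smul_eq_mul, ← Finset.mul_sum, husum, mul_zero]
    -- but ∑ |v i| > 0
    obtain ⟨j, hj⟩ := Function.ne_iff.mp hv0
    have hpos : 0 < ∑ i, av i := by
      have : 0 < av j := abs_pos.mpr hj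
      refine Finset.sum_pos' (fun i _ => abs_nonneg _) ⟨j, Finset.mem_univ j, this⟩
    rw [havsum] at hpos
    exact lt_irrefl 0 hpos
  exact ⟨v, hv0, by rw [le_antisymm hle hge]; exact hAv, hvsum⟩
end

section
/- Let G be a graph on d+2 vertices that is not complete multipartite, with adjacency matrix A_G and second largest eigenvalue λ₂, and set B̄ = λ₂·I − A_G. Then G has a spherical representation in ℝ^d if and only if wᵀ·B̄·w ≥ 0 for every w ∈ 𝟙^⊥, and every w ∈ 𝟙^⊥ with wᵀ·B̄·w = 0 satisfies B̄·w = 0 (i.e. w is an eigenvector of A_G with eigenvalue λ₂ or w = 0). -/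
open Matrix Finset
open scoped Classical

-- === tool.lean ===

noncomputable section Toolkit
variable {n : ℕ}

lemma sum_mul_sum_comm (f : Fin n → ℝ) (g : Fin n → Fin n → ℝ) :
    ∑ i, f i * ∑ j, g j i = ∑ j, ∑ i, f i * g j i := by
  simp_rw [Finset.mul_sum]; exact Finset.sum_comm

lemma dot_mulVec_double (v w : Fin n → ℝ) (N : Matrix (Fin n) (Fin n) ℝ) :
    v ⬝ᵥ N.mulVec w = ∑ i, ∑ j, v i * N i j * w j := by
  unfold dotProduct Matrix.mulVec dotProduct
  exact Finset.sum_congr rfl fun i _ => by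
    rw [Finset.mul_sum]; exact Finset.sum_congr rfl fun j _ => by ring

variable {A : Matrix (Fin n) (Fin n) ℝ} (hA : A.IsHermitian)

/-- coefficient of `w` on the `j`-th eigenvector -/
def coef (w : Fin n → ℝ) (j : Fin n) : ℝ := ∑ l, hA.eigenvectorBasis j l * w l

lemma evec_delta (j j' : Fin n) :
    ∑ i, hA.eigenvectorBasis j i * hA.eigenvectorBasis j' i = if j = j' then 1 else 0 := by
  have h := (hA.eigenvectorBasis).orthonormal
  rcases eq_or_ne j j' with rfl | hjj
  · have := h.1 j
    rw [@norm_eq_sqrt_real_inner] at this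
    have h2 : (inner ℝ (hA.eigenvectorBasis j) (hA.eigenvectorBasis j) : ℝ) = 1 := by
      nlinarith [Real.sq_sqrt (real_inner_self_nonneg (x := hA.eigenvectorBasis j)),
        real_inner_self_nonneg (x := hA.eigenvectorBasis j)]
    rw [if_pos rfl, ← h2]
    simp only [PiLp.inner_apply, RCLike.inner_apply, starRingEnd_apply, star_trivial]
  · have h2 := h.2 hjj
    simp only [PiLp.inner_apply, RCLike.inner_apply, starRingEnd_apply, star_trivial] at h2
    rw [if_neg hjj, ← h2]; exact Finset.sum_congr rfl fun i _ => mul_comm _ _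

lemma evec_expand (w : Fin n → ℝ) (i : Fin n) :
    w i = ∑ j, coef hA w j * hA.eigenvectorBasis j i := by
  have h := (hA.eigenvectorBasis).sum_repr' (WithLp.equiv 2 _ |>.symm w)
  have h2 := congrFun (congrArg (fun x => (WithLp.equiv 2 (Fin n → ℝ)) x) h) i
  simp only [PiLp.inner_apply, RCLike.inner_apply, starRingEnd_apply, star_trivial,
    WithLp.equiv_symm_apply, WithLp.equiv_apply, WithLp.ofLp_toLp, WithLp.ofLp_sum,
    WithLp.ofLp_smul, Finset.sum_apply, Pi.smul_apply, PiLp.toLp_apply, smul_eq_mul] at h2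
  rw [← h2]
  simp only [coef]
  refine Finset.sum_congr rfl fun j _ => ?_
  congr 1
  exact Finset.sum_congr rfl fun l _ => by ring

lemma dot_expand (w w' : Fin n → ℝ) :
    w ⬝ᵥ w' = ∑ j, coef hA w j * coef hA w' j := by
  unfold dotProduct
  calc ∑ i, w i * w' i = ∑ i, w i * ∑ j, coef hA w' j * hA.eigenvectorBasis j i := by
        refine Finset.sum_congr rfl fun i _ => by rw [← evec_expand hA w' i]
    _ = ∑ j, ∑ i, w i * (coef hA w' j * hA.eigenvectorBasis j i) := sum_mul_sum_comm _ _
    _ = ∑ j, coef hA w j * coef hA w' j := by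
        refine Finset.sum_congr rfl fun j _ => ?_
        have h5 : ∑ i, w i * (coef hA w' j * hA.eigenvectorBasis j i)
            = coef hA w' j * ∑ i, hA.eigenvectorBasis j i * w i := by
          rw [Finset.mul_sum]; exact Finset.sum_congr rfl fun i _ => by ring
        rw [h5]
        simp only [coef]; ring

lemma eq_zero_of_coef_zero (w : Fin n → ℝ) (h : ∀ j, coef hA w j = 0) : w = 0 := by
  funext i
  rw [Pi.zero_apply, evec_expand hA w i]
  simp [h]

lemma mulVec_expand (w : Fin n → ℝ) (i : Fin n) :
    A.mulVec w i = ∑ j, hA.eigenvalues j * coef hA w j * hA.eigenvectorBasis j i := by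
  have hw : w = fun l => ∑ j, coef hA w j * hA.eigenvectorBasis j l := funext (evec_expand hA w)
  conv_lhs => rw [hw]
  show ∑ l, A i l * ∑ j, coef hA w j * hA.eigenvectorBasis j l = _
  calc ∑ l, A i l * ∑ j, coef hA w j * hA.eigenvectorBasis j l
      = ∑ j, ∑ l, A i l * (coef hA w j * hA.eigenvectorBasis j l) := sum_mul_sum_comm _ _
    _ = ∑ j, hA.eigenvalues j * coef hA w j * hA.eigenvectorBasis j i := by
        refine Finset.sum_congr rfl fun j _ => ?_
        have h3 : ∑ l, A i l * hA.eigenvectorBasis j l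
            = hA.eigenvalues j * hA.eigenvectorBasis j i :=
          congrFun (hA.mulVec_eigenvectorBasis j) i
        calc ∑ l, A i l * (coef hA w j * hA.eigenvectorBasis j l)
            = coef hA w j * ∑ l, A i l * hA.eigenvectorBasis j l := by
              rw [Finset.mul_sum]; exact Finset.sum_congr rfl fun l _ => by ring
          _ = _ := by rw [h3]; ring

lemma coef_mulVec (w : Fin n → ℝ) (j : Fin n) :
    coef hA (A.mulVec w) j = hA.eigenvalues j * coef hA w j := by
  simp only [coef]
  calc ∑ l, hA.eigenvectorBasis j l * A.mulVec w l
      = ∑ l, hA.eigenvectorBasis j l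
          * ∑ j', hA.eigenvalues j' * coef hA w j' * hA.eigenvectorBasis j' l := by
        refine Finset.sum_congr rfl fun l _ => by rw [mulVec_expand hA w l]
    _ = ∑ j', ∑ l, hA.eigenvectorBasis j l
          * (hA.eigenvalues j' * coef hA w j' * hA.eigenvectorBasis j' l) := sum_mul_sum_comm _ _
    _ = ∑ j', (hA.eigenvalues j' * coef hA w j')
          * ∑ l, hA.eigenvectorBasis j l * hA.eigenvectorBasis j' l := by
        refine Finset.sum_congr rfl fun j' _ => by
          rw [Finset.mul_sum]; exact Finset.sum_congr rfl fun l _ => by ring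
    _ = hA.eigenvalues j * coef hA w j := by
        simp only [evec_delta hA]
        simp [coef]

lemma dot_mulVec_expand (w : Fin n → ℝ) :
    w ⬝ᵥ A.mulVec w = ∑ j, hA.eigenvalues j * (coef hA w j)^2 := by
  rw [dot_expand hA]
  refine Finset.sum_congr rfl fun j _ => by rw [coef_mulVec hA]; ring

/-- Rayleigh upper bound. -/
lemma rayleigh_le (θ : ℝ) (hθ : ∀ j, hA.eigenvalues j ≤ θ) (w : Fin n → ℝ) :
    w ⬝ᵥ A.mulVec w ≤ θ * (w ⬝ᵥ w) := by
  rw [dot_mulVec_expand hA, dot_expand hA, Finset.mul_sum]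
  refine Finset.sum_le_sum fun j _ => ?_
  have := sq_nonneg (coef hA w j)
  nlinarith [hθ j]

/-- equality case: Rayleigh maximizers are eigenvectors -/
lemma eigen_of_rayleigh_eq (θ : ℝ) (hθ : ∀ j, hA.eigenvalues j ≤ θ) (w : Fin n → ℝ)
    (he : w ⬝ᵥ A.mulVec w = θ * (w ⬝ᵥ w)) : A.mulVec w = θ • w := by
  have hterm : ∀ j ∈ Finset.univ, (0:ℝ) ≤ (θ - hA.eigenvalues j) * (coef hA w j)^2 :=
    fun j _ => mul_nonneg (by linarith [hθ j]) (sq_nonneg _)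
  have hsum : ∑ j, (θ - hA.eigenvalues j) * (coef hA w j)^2 = 0 := by
    rw [dot_mulVec_expand hA, dot_expand hA] at he
    have h4 : ∑ j, (θ - hA.eigenvalues j) * (coef hA w j)^2
        = θ * (∑ j, coef hA w j * coef hA w j) - ∑ j, hA.eigenvalues j * (coef hA w j)^2 := by
      rw [Finset.mul_sum, ← Finset.sum_sub_distrib]
      exact Finset.sum_congr rfl fun j _ => by ring
    rw [h4, ← he]; ring
  have hz := (Finset.sum_eq_zero_iff_of_nonneg hterm).mp hsum
  have hkey : ∀ j, hA.eigenvalues j * coef hA w j = θ * coef hA w j := by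
    intro j
    rcases mul_eq_zero.mp (hz j (Finset.mem_univ j)) with h | h
    · rw [sub_eq_zero] at h; rw [← h]
    · rw [sq_eq_zero_iff] at h; rw [h]; ring
  funext i
  rw [Pi.smul_apply, smul_eq_mul, mulVec_expand hA, evec_expand hA w i, Finset.mul_sum]
  refine Finset.sum_congr rfl fun j _ => by rw [mul_assoc, ← mul_assoc θ, ← hkey j]; ring

/-- an eigenvalue of a nonzero eigenvector occurs among `hA.eigenvalues` -/
lemma exists_eigen_index (θ : ℝ) (w : Fin n → ℝ) (hw : w ≠ 0)
    (he : A.mulVec w = θ • w) :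
    ∃ j, hA.eigenvalues j = θ ∧ coef hA w j ≠ 0 := by
  by_contra hcon
  push_neg at hcon
  apply hw
  apply eq_zero_of_coef_zero hA
  intro j
  by_contra hj
  have h1 : coef hA (A.mulVec w) j = hA.eigenvalues j * coef hA w j := coef_mulVec hA w j
  have h2 : coef hA (θ • w) j = θ * coef hA w j := by
    simp only [coef, Pi.smul_apply, smul_eq_mul, Finset.mul_sum]
    exact Finset.sum_congr rfl fun l _ => by ring
  rw [he, h2] at h1
  have : hA.eigenvalues j = θ := by
    exact mul_right_cancel₀ hj h1.symm
  exact hj (hcon j this)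

end Toolkit

-- === graph.lean ===


lemma exists_triple {n : ℕ} (G : SimpleGraph (Fin n)) (hG : ¬ IsCompleteMultipartite G) :
    ∃ a b c : Fin n, G.Adj a b ∧ ¬ G.Adj a c ∧ ¬ G.Adj b c ∧ a ≠ c ∧ b ≠ c := by
  by_contra hcon
  push_neg at hcon
  -- hcon : ∀ a b c, Adj a b → ¬Adj a c → ¬Adj b c → a ≠ c → b = c
  apply hG
  have htrans : ∀ i j l : Fin n, ¬ G.Adj i j → ¬ G.Adj j l → ¬ G.Adj i l := by
    intro i j l hij hjl hil
    rcases eq_or_ne i j with rfl | hne1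
    · exact hjl hil
    rcases eq_or_ne l j with rfl | hne2
    · exact hij hil
    -- Adj i l, ¬Adj i j, ¬Adj l j, i ≠ j ⇒ l = j, contradiction
    exact hne2 (hcon i l j hil hij (fun h => hjl (G.adj_symm h)) hne1)
  set cls : Fin n → Finset (Fin n) := fun i => univ.filter (fun j => ¬ G.Adj i j) with hcls
  have hmem : ∀ i, i ∈ cls i := fun i => by simp [hcls, G.irrefl]
  have hne : ∀ i, (cls i).Nonempty := fun i => ⟨i, hmem i⟩
  refine ⟨fun i => (cls i).min' (hne i), fun i j => ?_⟩
  have hclseq : ∀ i j, ¬ G.Adj i j → cls i = cls j := by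
    intro i j hij
    ext l
    simp only [hcls, mem_filter, mem_univ, true_and]
    constructor
    · exact fun hl => htrans j i l (fun h => hij (G.adj_symm h)) hl
    · exact fun hl => htrans i j l hij hl
  constructor
  · intro hadj heq
    simp only at heq
    have h1 : ¬ G.Adj i ((cls i).min' (hne i)) := by
      have := (cls i).min'_mem (hne i); simpa [hcls] using this
    have h2 : ¬ G.Adj j ((cls j).min' (hne j)) := by
      have := (cls j).min'_mem (hne j); simpa [hcls] using this
    rw [heq] at h1
    exact htrans i ((cls j).min' (hne j)) j h1 (fun h => h2 (G.adj_symm h)) hadj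
  · intro hne'
    by_contra hadj
    apply hne'
    simp only
    congr 1
    exact hclseq i j hadj

-- === range.lean ===

lemma exists_preimage_ones {n : ℕ} (B : Matrix (Fin n) (Fin n) ℝ) (hsym : B.IsHermitian)
    (hker : ∀ z : Fin n → ℝ, B.mulVec z = 0 → ∑ i, z i = 0) :
    ∃ v : Fin n → ℝ, B.mulVec v = (fun _ => 1) := by
  have hBt : Bᵀ = B := by
    rw [← Matrix.conjTranspose_eq_transpose_of_trivial]; exact hsym
  set K := LinearMap.range (Matrix.toEuclideanLin B) with hK
  set o : EuclideanSpace ℝ (Fin n) := (WithLp.equiv 2 _).symm (fun _ => (1:ℝ)) with ho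
  set y : EuclideanSpace ℝ (Fin n) := o - (K.orthogonalProjection o : EuclideanSpace ℝ (Fin n)) with hy
  have hyK : y ∈ Kᗮ := Submodule.sub_starProjection_mem_orthogonal (K := K) o
  have hBy : B.mulVec (WithLp.equiv 2 _ y) = 0 := by
    funext i
    have hx : ∀ x : Fin n → ℝ, (B.mulVec x) ⬝ᵥ (WithLp.equiv 2 _ y) = 0 := by
      intro x
      have hmem : (Matrix.toEuclideanLin B) ((WithLp.equiv 2 _).symm x) ∈ K :=
        LinearMap.mem_range_self _ _
      have := (Submodule.mem_orthogonal K y).mp hyK _ hmem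
      rw [← this]
      simp [PiLp.inner_apply, Matrix.toEuclideanLin_apply, dotProduct, mul_comm]
    have hsymm : ∀ x : Fin n → ℝ, x ⬝ᵥ (B.mulVec (WithLp.equiv 2 _ y)) = 0 := by
      intro x
      rw [Matrix.dotProduct_mulVec, ← Matrix.mulVec_transpose, hBt]
      exact hx x
    have := hsymm (Pi.single i 1)
    simpa [dotProduct, Pi.single_apply] using this
  have hsumy : ∑ i, (WithLp.equiv 2 _ y) i = 0 := hker _ hBy
  have h1 : (inner ℝ o y : ℝ) = 0 := by
    have he : (inner ℝ o y : ℝ) = ∑ i, (WithLp.equiv 2 _ y) i := by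
      simp [PiLp.inner_apply, ho]
    rw [he, hsumy]
  have h2 : (inner ℝ ((K.orthogonalProjection o : EuclideanSpace ℝ (Fin n))) y : ℝ) = 0 :=
    (Submodule.mem_orthogonal K y).mp hyK _ (Submodule.coe_mem _)
  have hynorm : (inner ℝ y y : ℝ) = 0 := by
    have h3 : (inner ℝ y y : ℝ)
        = (inner ℝ o y : ℝ) - inner ℝ ((K.orthogonalProjection o : EuclideanSpace ℝ (Fin n))) y := by
      rw [hy, inner_sub_left]
    rw [h3, h1, h2]; ring
  have hy0 : y = 0 := inner_self_eq_zero.mp hynorm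
  have hoK : o ∈ K := by
    have : o = (K.orthogonalProjection o : EuclideanSpace ℝ (Fin n)) := by
      have := sub_eq_zero.mp (hy ▸ hy0)
      exact this
    rw [this]; exact Submodule.coe_mem _
  obtain ⟨x, hx⟩ := hoK
  refine ⟨WithLp.equiv 2 _ x, ?_⟩
  have := congrArg (fun z => WithLp.equiv 2 (Fin n → ℝ) z) hx
  simp only [Matrix.toEuclideanLin_apply] at this
  convert this using 1 <;> rfl

-- === perp.lean ===

noncomputable section

lemma coef_comb {n : ℕ} {A : Matrix (Fin n) (Fin n) ℝ} (hA : A.IsHermitian)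
    (α β : ℝ) (a b : Fin n) (j : Fin n) :
    coef hA (fun i => α * hA.eigenvectorBasis a i + β * hA.eigenvectorBasis b i) j
      = (if j = a then α else 0) + (if j = b then β else 0) := by
  simp only [coef, Finset.mul_sum]
  rw [show (∑ l, hA.eigenvectorBasis j l
      * (α * hA.eigenvectorBasis a l + β * hA.eigenvectorBasis b l))
    = α * (∑ l, hA.eigenvectorBasis j l * hA.eigenvectorBasis a l)
      + β * (∑ l, hA.eigenvectorBasis j l * hA.eigenvectorBasis b l) from by
      rw [Finset.mul_sum, Finset.mul_sum, ← Finset.sum_add_distrib]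
      exact Finset.sum_congr rfl fun l _ => by ring]
  rw [evec_delta hA j a, evec_delta hA j b]
  split <;> split <;> ring

lemma exists_perp_vec {d : ℕ} {A : Matrix (Fin (d+2)) (Fin (d+2)) ℝ} (hA : A.IsHermitian)
    (μ : Fin (d+2) → ℝ) (hmono : Antitone μ) (σ : Equiv.Perm (Fin (d+2)))
    (hμ : μ = hA.eigenvalues ∘ σ) :
    ∃ w : Fin (d+2) → ℝ, (∑ i, w i) = 0 ∧ 0 < w ⬝ᵥ w ∧
      μ 1 * (w ⬝ᵥ w) ≤ w ⬝ᵥ A.mulVec w := by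
  have h01 : (0 : Fin (d+2)) ≠ 1 := by
    intro h
    have := congrArg Fin.val h
    simp [Fin.val_one] at this
  have hab : σ 0 ≠ σ 1 := fun h => h01 (σ.injective h)
  have hμ01 : μ 1 ≤ μ 0 := hmono (Fin.zero_le 1)
  -- choose coefficients
  set s0 := ∑ i, hA.eigenvectorBasis (σ 0) i with hs0
  set s1 := ∑ i, hA.eigenvectorBasis (σ 1) i with hs1
  obtain ⟨α, β, hsum0, hne⟩ : ∃ α β : ℝ, α * s0 + β * s1 = 0 ∧ ¬(α = 0 ∧ β = 0) := by
    by_cases h : s0 = 0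
    · exact ⟨1, 0, by rw [h]; ring, by simp⟩
    · exact ⟨s1, -s0, by ring, fun ⟨_, hb⟩ => h (by linarith [neg_eq_zero.mp hb])⟩
  set w : Fin (d+2) → ℝ :=
    fun i => α * hA.eigenvectorBasis (σ 0) i + β * hA.eigenvectorBasis (σ 1) i with hw
  have hcoef : ∀ j, coef hA w j = (if j = σ 0 then α else 0) + (if j = σ 1 then β else 0) :=
    coef_comb hA α β (σ 0) (σ 1)
  have hcoefsq : ∀ j, (coef hA w j)^2
      = (if j = σ 0 then α^2 else 0) + (if j = σ 1 then β^2 else 0) := by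
    intro j
    rw [hcoef j]
    rcases eq_or_ne j (σ 0) with rfl | h0
    · simp [hab]
    · rcases eq_or_ne j (σ 1) with rfl | h1
      · simp [h0]
      · simp [h0, h1]
  have hdot : w ⬝ᵥ w = α^2 + β^2 := by
    rw [dot_expand hA]
    calc ∑ j, coef hA w j * coef hA w j = ∑ j, (coef hA w j)^2 :=
          Finset.sum_congr rfl fun j _ => (sq (coef hA w j)).symm
      _ = α^2 + β^2 := by
          rw [Finset.sum_congr rfl fun j _ => hcoefsq j, Finset.sum_add_distrib]
          simp [Finset.sum_ite_eq']
  have hAdot : w ⬝ᵥ A.mulVec w = μ 0 * α^2 + μ 1 * β^2 := by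
    rw [dot_mulVec_expand hA, Finset.sum_congr rfl fun j _ => by
      rw [hcoefsq j]]
    have he : ∀ j, hA.eigenvalues j * ((if j = σ 0 then α^2 else 0)
        + (if j = σ 1 then β^2 else 0))
        = (if j = σ 0 then hA.eigenvalues (σ 0) * α^2 else 0)
          + (if j = σ 1 then hA.eigenvalues (σ 1) * β^2 else 0) := by
      intro j
      rcases eq_or_ne j (σ 0) with rfl | h0
      · simp [hab]
      · rcases eq_or_ne j (σ 1) with rfl | h1
        · simp [h0]
        · simp [h0, h1]
    rw [Finset.sum_congr rfl fun j _ => he j, Finset.sum_add_distrib]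
    have hm0 : hA.eigenvalues (σ 0) = μ 0 := by rw [hμ]; rfl
    have hm1 : hA.eigenvalues (σ 1) = μ 1 := by rw [hμ]; rfl
    simp [Finset.sum_ite_eq', hm0, hm1]
  have hwsum : ∑ i, w i = 0 := by
    rw [hw]
    rw [Finset.sum_add_distrib, ← Finset.mul_sum, ← Finset.mul_sum, ← hs0, ← hs1]
    exact hsum0
  have hpos : 0 < w ⬝ᵥ w := by
    rw [hdot]
    rcases not_and_or.mp hne with h | h <;> positivity
  refine ⟨w, hwsum, hpos, ?_⟩
  rw [hdot, hAdot]
  nlinarith [sq_nonneg α, sq_nonneg β]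

-- === gram.lean ===

noncomputable section

lemma gram_realize {d : ℕ} (M : Matrix (Fin (d+2)) (Fin (d+2)) ℝ) (hM : M.IsHermitian)
    (hpsd : ∀ w : Fin (d+2) → ℝ, 0 ≤ w ⬝ᵥ M.mulVec w)
    (w₀ v : Fin (d+2) → ℝ) (hw₀ : M.mulVec w₀ = 0) (hv : M.mulVec v = 0)
    (hw₀sum : ∑ i, w₀ i = 0) (hvsum : ∑ i, v i = 1) (hw₀ne : w₀ ≠ 0) :
    ∃ p : Fin (d+2) → EuclideanSpace ℝ (Fin d),
      ∀ i i', (inner ℝ (p i) (p i') : ℝ) = M i i' := by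
  set ν := hM.eigenvalues with hν
  -- eigenvalues are nonnegative
  have hnn : ∀ j, 0 ≤ ν j := by
    intro j
    have h1 := hpsd (hM.eigenvectorBasis j)
    rw [dot_mulVec_expand hM] at h1
    have h2 : ∀ j', hM.eigenvalues j' * (coef hM (hM.eigenvectorBasis j) j')^2
        = if j' = j then ν j else 0 := by
      intro j'
      have : coef hM (hM.eigenvectorBasis j) j' = if j' = j then 1 else 0 := by
        simpa [coef] using evec_delta hM j' j
      rw [this]
      split <;> simp_all
    rw [Finset.sum_congr rfl (fun j' _ => h2 j')] at h1
    simpa using h1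
  -- coefficients of kernel vectors vanish on S
  have hcoefker : ∀ (w : Fin (d+2) → ℝ), M.mulVec w = 0 → ∀ j, ν j ≠ 0 → coef hM w j = 0 := by
    intro w hw j hj
    have h1 : coef hM (M.mulVec w) j = ν j * coef hM w j := coef_mulVec hM w j
    rw [hw] at h1
    have h0 : coef hM (0 : Fin (d+2) → ℝ) j = 0 := by simp [coef]
    rw [h0] at h1
    exact (mul_eq_zero.mp h1.symm).resolve_left hj
  set S := univ.filter (fun j => ν j ≠ 0) with hS
  set C := univ.filter (fun j => ν j = 0) with hC
  have hcard : S.card ≤ d := by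
    by_contra hcon
    push_neg at hcon
    have hSC : S.card + C.card = d + 2 := by
      have hCC : C = univ.filter (fun j => ¬ ν j ≠ 0) := by
        rw [hC]; congr 1; funext j; simp
      rw [hS, hCC, Finset.card_filter_add_card_filter_not (fun j => ν j ≠ 0)]
      simp
    have hCle : C.card ≤ 1 := by omega
    -- w₀ and v are supported (in coef) on C
    have hsupp : ∀ (w : Fin (d+2) → ℝ), M.mulVec w = 0 →
        ∀ i, w i = ∑ j ∈ C, coef hM w j * hM.eigenvectorBasis j i := by
      intro w hw i
      rw [evec_expand hM w i]
      rw [← Finset.sum_filter_add_sum_filter_not univ (fun j => ν j = 0)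
        (fun j => coef hM w j * hM.eigenvectorBasis j i)]
      have : ∀ j ∈ univ.filter (fun j => ¬ ν j = 0),
          coef hM w j * hM.eigenvectorBasis j i = 0 := by
        intro j hj
        rw [hcoefker w hw j (by simpa [hS] using (Finset.mem_filter.mp hj).2)]
        ring
      rw [Finset.sum_congr rfl this]
      simp [hC]
    interval_cases h : C.card
    · -- C empty: w₀ = 0
      have hCe : C = ∅ := Finset.card_eq_zero.mp h
      apply hw₀ne
      funext i
      rw [hsupp w₀ hw₀ i, hCe]
      simp
    · -- C = {j₀}
      obtain ⟨j₀, hj₀⟩ := Finset.card_eq_one.mp h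
      have hw₀i : ∀ i, w₀ i = coef hM w₀ j₀ * hM.eigenvectorBasis j₀ i := by
        intro i; rw [hsupp w₀ hw₀ i, hj₀, Finset.sum_singleton]
      have hvi : ∀ i, v i = coef hM v j₀ * hM.eigenvectorBasis j₀ i := by
        intro i; rw [hsupp v hv i, hj₀, Finset.sum_singleton]
      set s := ∑ i, hM.eigenvectorBasis j₀ i with hs
      have h1 : coef hM w₀ j₀ * s = 0 := by
        rw [← hw₀sum, hs, Finset.mul_sum]
        exact Finset.sum_congr rfl fun i _ => (hw₀i i).symm
      have h2 : coef hM v j₀ * s = 1 := by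
        rw [← hvsum, hs, Finset.mul_sum]
        exact Finset.sum_congr rfl fun i _ => (hvi i).symm
      have hsne : s ≠ 0 := fun h => by rw [h, mul_zero] at h2; exact one_ne_zero h2.symm
      have hc0 : coef hM w₀ j₀ = 0 := by
        rcases mul_eq_zero.mp h1 with h | h
        · exact h
        · exact absurd h hsne
      apply hw₀ne
      funext i
      rw [hw₀i i, hc0]; simp
  -- now build the points
  have hinj : Function.Injective
      (fun j : {x // x ∈ S} => Fin.castLE hcard ((S.orderIsoOfFin rfl).symm j)) := by
    intro a b hab
    have : ((S.orderIsoOfFin rfl).symm a : Fin S.card) = (S.orderIsoOfFin rfl).symm b := by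
      exact Fin.castLE_injective hcard hab
    simpa using ((S.orderIsoOfFin rfl).symm.injective this)
  set e : {x // x ∈ S} → Fin d :=
    fun j => Fin.castLE hcard ((S.orderIsoOfFin rfl).symm j) with he
  refine ⟨fun i => ∑ j : {x // x ∈ S},
      (Real.sqrt (ν j) * hM.eigenvectorBasis j i) • EuclideanSpace.single (e j) (1:ℝ),
    fun i i' => ?_⟩
  rw [inner_sum]
  have hterm : ∀ j : {x // x ∈ S},
      (inner ℝ (∑ j' : {x // x ∈ S}, (Real.sqrt (ν j') * hM.eigenvectorBasis j' i)
          • EuclideanSpace.single (e j') (1:ℝ))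
        ((Real.sqrt (ν j) * hM.eigenvectorBasis j i') • EuclideanSpace.single (e j) (1:ℝ)) : ℝ)
      = ν j * hM.eigenvectorBasis j i * hM.eigenvectorBasis j i' := by
    intro j
    rw [inner_smul_right, sum_inner]
    have hthis : ∀ j' : {x // x ∈ S},
        (inner ℝ ((Real.sqrt (ν j') * hM.eigenvectorBasis j' i)
            • EuclideanSpace.single (e j') (1:ℝ)) (EuclideanSpace.single (e j) (1:ℝ)) : ℝ)
        = if j' = j then Real.sqrt (ν j) * hM.eigenvectorBasis j i else 0 := by
      intro j'
      rw [real_inner_smul_left, EuclideanSpace.inner_single_left]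
      simp only [starRingEnd_apply, star_trivial, star_one, one_mul,
        EuclideanSpace.single_apply]
      rcases eq_or_ne j' j with rfl | hne
      · simp
      · have hee : e j' ≠ e j := fun hc => hne (hinj hc)
        simp [hne, hee, Ne.symm hee]
    rw [Finset.sum_congr rfl (fun j' _ => hthis j')]
    rw [Finset.sum_eq_single j (fun b _ hb => by rw [if_neg hb])
      (fun h => absurd (Finset.mem_univ j) h), if_pos rfl]
    have hsq : Real.sqrt (ν j) * Real.sqrt (ν j) = ν (j : Fin (d+2)) :=
      Real.mul_self_sqrt (hnn j)
    linear_combination (hM.eigenvectorBasis (j : Fin (d+2)) i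
      * hM.eigenvectorBasis (j : Fin (d+2)) i') * hsq
  rw [Finset.sum_congr rfl (fun j _ => hterm j)]
  have hMi : M i' i = ∑ j, ν j * hM.eigenvectorBasis j i' * hM.eigenvectorBasis j i := by
    have h1 := mulVec_expand hM (Pi.single i (1:ℝ)) i'
    have h2 : M.mulVec (Pi.single i 1) i' = M i' i := by
      simp [Matrix.mulVec, dotProduct, Pi.single_apply]
    rw [h2] at h1
    rw [h1]
    refine Finset.sum_congr rfl fun j _ => ?_
    have h4 : coef hM (Pi.single i 1) j = hM.eigenvectorBasis j i := by
      simp [coef, Pi.single_apply]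
    rw [h4]
    ring
  have hsym : M i i' = M i' i := by
    have h5 := congrFun (congrFun hM i) i'
    simpa using h5.symm
  have hstep : ∑ j : {x // x ∈ S},
      ν (j : Fin (d+2)) * hM.eigenvectorBasis (j : Fin (d+2)) i
        * hM.eigenvectorBasis (j : Fin (d+2)) i'
      = ∑ j ∈ S, ν j * hM.eigenvectorBasis j i * hM.eigenvectorBasis j i' :=
    Finset.sum_coe_sort S (fun j => ν j * hM.eigenvectorBasis j i * hM.eigenvectorBasis j i')
  rw [hstep, hsym, hMi,
    ← Finset.sum_filter_add_sum_filter_not univ (fun j => ν j ≠ 0)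
      (fun j => ν j * hM.eigenvectorBasis j i' * hM.eigenvectorBasis j i)]
  have hz : ∑ j ∈ univ.filter (fun j => ¬ ν j ≠ 0),
      ν j * hM.eigenvectorBasis j i' * hM.eigenvectorBasis j i = 0 := by
    refine Finset.sum_eq_zero fun j hj => ?_
    have : ν j = 0 := by simpa using (Finset.mem_filter.mp hj).2
    rw [this]; ring
  rw [hz, add_zero, ← hS]
  exact Finset.sum_congr rfl fun j _ => by ring

-- === fwd.lean ===

noncomputable section

set_option maxHeartbeats 2000000 in
theorem forward_dir (d : ℕ) (G : SimpleGraph (Fin (d+2))) [DecidableRel G.Adj]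
    (hA : (G.adjMatrix ℝ).IsHermitian)
    (μ : Fin (d+2) → ℝ) (hmono : Antitone μ)
    (σ : Equiv.Perm (Fin (d+2))) (hμ : μ = hA.eigenvalues ∘ σ)
    (hsph : Spherical (d+2) d G) :
    (∀ w : Fin (d+2) → ℝ, (∑ i, w i) = 0 →
        0 ≤ μ 1 * (w ⬝ᵥ w) - w ⬝ᵥ (G.adjMatrix ℝ).mulVec w) ∧
    (∀ w : Fin (d+2) → ℝ, (∑ i, w i) = 0 →
        μ 1 * (w ⬝ᵥ w) - w ⬝ᵥ (G.adjMatrix ℝ).mulVec w = 0 →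
        (G.adjMatrix ℝ).mulVec w = μ 1 • w) := by
  obtain ⟨k, p, cc, r, ⟨α₁, α₂, hlt, hpos, hk, hadje, hnadje, hedge, hnedge⟩, hsphere⟩ := hsph
  set A := G.adjMatrix ℝ with hAdef
  have hk1 : 1 < k := by rw [hk]; exact (one_lt_div hpos).mpr hlt
  set t : ℝ := k^2 - 1 with ht
  have htpos : 0 < t := by nlinarith
  set θ : ℝ := 1/t with hθ
  set q : Fin (d+2) → EuclideanSpace ℝ (Fin d) := fun i => p i - cc with hq
  have hqn : ∀ i, (inner ℝ (q i) (q i) : ℝ) = r^2 := by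
    intro i
    rw [real_inner_self_eq_norm_sq, hq]
    simp only
    rw [← dist_eq_norm, hsphere i]
  have hqij : ∀ i j, (inner ℝ (q i) (q j) : ℝ) = r^2 - (dist (p i) (p j))^2 / 2 := by
    intro i j
    have hsub : q i - q j = p i - p j := by rw [hq]; simp only; abel
    have hnorm : ‖q i - q j‖^2 = ‖q i‖^2 - 2 * (inner ℝ (q i) (q j) : ℝ) + ‖q j‖^2 :=
      norm_sub_sq_real (q i) (q j)
    have h1 : ‖q i‖^2 = r^2 := by rw [← real_inner_self_eq_norm_sq, hqn]
    have h2 : ‖q j‖^2 = r^2 := by rw [← real_inner_self_eq_norm_sq, hqn]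
    have h3 : ‖q i - q j‖^2 = (dist (p i) (p j))^2 := by rw [hsub, ← dist_eq_norm]
    rw [h1, h2, h3] at hnorm
    linarith
  set M : Matrix (Fin (d+2)) (Fin (d+2)) ℝ :=
    Matrix.of (fun i j => (inner ℝ (q i) (q j) : ℝ)) with hMdef
  -- adjacency facts
  have hAapp : ∀ i j, A i j = if G.Adj i j then (1:ℝ) else 0 := by
    intro i j; rw [hAdef]; simp [SimpleGraph.adjMatrix_apply]
  have hAnn : ∀ i j, 0 ≤ A i j := by
    intro i j; rw [hAapp]; split <;> norm_num
  -- distance squared formula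
  have hα₁ : α₁ = k * α₂ := by rw [hk]; field_simp
  have hdist : ∀ i j, (dist (p i) (p j))^2
      = α₂^2 * (1 + t * A i j) - α₂^2 * (if i = j then 1 else 0) := by
    intro i j
    rcases eq_or_ne i j with rfl | hij
    · rw [if_pos rfl, hAapp]
      rw [if_neg (G.irrefl)]
      simp
    · rw [if_neg hij, hAapp]
      by_cases hadj : G.Adj i j
      · rw [if_pos hadj, hadje i j hadj, hα₁, ht]; ring
      · rw [if_neg hadj, hnadje i j hij hadj]; ring
  have hMentry : ∀ i j, M i j
      = r^2 - (α₂^2 * (1 + t * A i j) - α₂^2 * (if i = j then 1 else 0))/2 := by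
    intro i j
    rw [hMdef]
    show (inner ℝ (q i) (q j) : ℝ) = _
    rw [hqij i j, hdist i j]
  -- mulVec formula
  have hMmul : ∀ (z : Fin (d+2) → ℝ) i, M.mulVec z i
      = (r^2 - α₂^2/2 - α₂^2*t/2 * 0) * (∑ j, z j) - (α₂^2*t/2) * (A.mulVec z) i
        + (α₂^2/2) * z i := by
    intro z i
    show ∑ j, M i j * z j = _
    have hsummand : ∀ j, M i j * z j
        = (r^2 - α₂^2/2) * z j - (α₂^2*t/2) * (A i j * z j)
          + (α₂^2/2) * (if j = i then z j else 0) := by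
      intro j
      rw [hMentry i j]
      rcases eq_or_ne i j with rfl | hij
      · rw [if_pos rfl, if_pos rfl]; ring
      · rw [if_neg hij, if_neg (Ne.symm hij)]; ring
    rw [Finset.sum_congr rfl fun j _ => hsummand j]
    rw [Finset.sum_add_distrib, Finset.sum_sub_distrib, ← Finset.mul_sum, ← Finset.mul_sum,
      ← Finset.mul_sum, Finset.sum_ite_eq' univ i z]
    have : (A.mulVec z) i = ∑ j, A i j * z j := rfl
    rw [this]
    simp only [Finset.mem_univ, if_true]
    ring
  -- dot product formula
  have hMdot : ∀ w : Fin (d+2) → ℝ, w ⬝ᵥ M.mulVec w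
      = (r^2 - α₂^2/2) * (∑ i, w i)^2 - (α₂^2*t/2) * (w ⬝ᵥ A.mulVec w)
        + (α₂^2/2) * (w ⬝ᵥ w) := by
    intro w
    show ∑ i, w i * M.mulVec w i = _
    rw [Finset.sum_congr rfl fun i _ => by rw [hMmul w i]]
    have hexp : ∀ i, w i * ((r^2 - α₂^2/2 - α₂^2*t/2 * 0) * (∑ j, w j)
        - (α₂^2*t/2) * (A.mulVec w) i + (α₂^2/2) * w i)
        = ((r^2 - α₂^2/2) * (∑ j, w j)) * w i - (α₂^2*t/2) * (w i * (A.mulVec w) i)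
          + (α₂^2/2) * (w i * w i) := by
      intro i; ring
    rw [Finset.sum_congr rfl fun i _ => hexp i]
    rw [Finset.sum_add_distrib, Finset.sum_sub_distrib, ← Finset.mul_sum, ← Finset.mul_sum,
      ← Finset.mul_sum]
    have h1 : (w ⬝ᵥ A.mulVec w) = ∑ i, w i * (A.mulVec w) i := rfl
    have h2 : (w ⬝ᵥ w) = ∑ i, w i * w i := rfl
    rw [h1, h2]
    ring
  -- Gram structure
  have hMw : ∀ (w : Fin (d+2) → ℝ) i, M.mulVec w i
      = (inner ℝ (q i) (∑ j, w j • q j) : ℝ) := by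
    intro w i
    rw [inner_sum]
    show ∑ j, M i j * w j = _
    refine Finset.sum_congr rfl fun j _ => ?_
    rw [real_inner_smul_right]
    show (inner ℝ (q i) (q j) : ℝ) * w j = _
    ring
  have hdotGram : ∀ w : Fin (d+2) → ℝ, w ⬝ᵥ M.mulVec w
      = (inner ℝ (∑ i, w i • q i) (∑ j, w j • q j) : ℝ) := by
    intro w
    rw [sum_inner]
    show ∑ i, w i * M.mulVec w i = _
    refine Finset.sum_congr rfl fun i _ => ?_
    rw [real_inner_smul_left, hMw w i]
  have hpsd : ∀ w : Fin (d+2) → ℝ, 0 ≤ w ⬝ᵥ M.mulVec w := by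
    intro w; rw [hdotGram]; exact real_inner_self_nonneg
  -- the Gram inequality on the hyperplane
  have hineq : ∀ w : Fin (d+2) → ℝ, (∑ i, w i) = 0
      → t * (w ⬝ᵥ A.mulVec w) ≤ w ⬝ᵥ w := by
    intro w hw
    have h1 := hpsd w
    rw [hMdot w, hw] at h1
    have hα : (0:ℝ) < α₂^2 := pow_pos hpos 2
    by_contra hcon
    push_neg at hcon
    have h3 : (α₂^2/2) * ((w ⬝ᵥ w) - t * (w ⬝ᵥ A.mulVec w)) < 0 :=
      mul_neg_of_pos_of_neg (by positivity) (by linarith)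
    nlinarith [h1, h3]
  -- kernel vector
  set L : (Fin (d+2) → ℝ) →ₗ[ℝ] (EuclideanSpace ℝ (Fin d)) × ℝ :=
    { toFun := fun w => (∑ i, w i • q i, ∑ i, w i),
      map_add' := by
        intro x y
        simp only [Pi.add_apply, add_smul, Finset.sum_add_distrib, Prod.mk_add_mk]
      map_smul' := by
        intro c x
        simp only [Pi.smul_apply, smul_eq_mul, RingHom.id_apply, Prod.smul_mk,
          Finset.smul_sum, smul_smul, Finset.mul_sum] } with hL
  have hkerne : LinearMap.ker L ≠ ⊥ := by
    intro hbot
    have hinj : Function.Injective L := LinearMap.ker_eq_bot.mp hbot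
    have hle := LinearMap.finrank_le_finrank_of_injective hinj
    rw [Module.finrank_prod, finrank_euclideanSpace_fin, Module.finrank_self] at hle
    have : Module.finrank ℝ (Fin (d+2) → ℝ) = d+2 := by
      simp [Module.finrank_pi]
    omega
  obtain ⟨w₀, hw₀mem, hw₀ne⟩ := Submodule.exists_mem_ne_zero_of_ne_bot hkerne
  have hw₀pair := LinearMap.mem_ker.mp hw₀mem
  have hw₀q : ∑ i, w₀ i • q i = 0 := congrArg Prod.fst hw₀pair
  have hw₀sum : ∑ i, w₀ i = 0 := congrArg Prod.snd hw₀pair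
  -- kernel of the Gram matrix
  have hMker : ∀ w : Fin (d+2) → ℝ, (∑ i, w i • q i) = 0 → M.mulVec w = 0 := by
    intro w hw
    funext i
    rw [hMw w i, hw]
    simp
  have hAeig : ∀ w : Fin (d+2) → ℝ, (∑ i, w i) = 0 → M.mulVec w = 0
      → A.mulVec w = θ • w := by
    intro w hwsum hMw0
    funext i
    have h1 := hMmul w i
    rw [hMw0, hwsum] at h1
    simp only [Pi.zero_apply] at h1
    have hα : (0:ℝ) < α₂^2 := pow_pos hpos 2
    have h2 : (α₂^2/2) * (t * (A.mulVec w i)) = (α₂^2/2) * w i := by linarith [h1]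
    have h3 : t * (A.mulVec w i) = w i :=
      mul_left_cancel₀ (by positivity) h2
    rw [Pi.smul_apply, smul_eq_mul, hθ]
    field_simp
    linarith [h3]
  -- A w₀ = θ w₀
  have hAw₀ : A.mulVec w₀ = θ • w₀ := hAeig w₀ hw₀sum (hMker w₀ hw₀q)
  -- θ = μ 1
  have hθge : μ 1 ≤ θ := by
    obtain ⟨w', hsum', hpos', hray'⟩ := exists_perp_vec hA μ hmono σ hμ
    have hray2 : μ 1 * (w' ⬝ᵥ w') ≤ w' ⬝ᵥ A.mulVec w' := hray'
    have h1 := hineq w' hsum'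
    have h4 : t * (μ 1 * (w' ⬝ᵥ w')) ≤ w' ⬝ᵥ w' :=
      le_trans (mul_le_mul_of_nonneg_left hray2 htpos.le) h1
    rw [hθ, le_div_iff₀ htpos]
    nlinarith [h4, hpos']
  have hθle : θ ≤ μ 1 := by
    by_contra hgt
    push_neg at hgt
    -- θ is the top eigenvalue μ 0
    have hidx : ∀ j : Fin (d+2), hA.eigenvalues j = θ → j = σ 0 := by
      intro j hj
      have h1 : μ (σ.symm j) = θ := by rw [hμ]; simp [hj]
      have h2 : σ.symm j = 0 := by
        by_contra hne0
        have hge1 : (1 : Fin (d+2)) ≤ σ.symm j := by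
          rw [Fin.le_def, Fin.val_one]
          have : (σ.symm j).val ≠ 0 := fun hc => hne0 (Fin.ext hc)
          omega
        have := hmono hge1
        rw [h1] at this
        linarith
      rw [← h2]; simp
    obtain ⟨j, hjθ, _⟩ := exists_eigen_index hA θ w₀ hw₀ne hAw₀
    have hθ0 : θ = μ 0 := by
      rw [← hjθ, hμ]
      have := hidx j hjθ
      rw [this]; simp
    have hall : ∀ j', hA.eigenvalues j' ≤ θ := by
      intro j'
      have h1 : hA.eigenvalues j' = μ (σ.symm j') := by rw [hμ]; simp
      rw [h1, hθ0]
      exact hmono (Fin.zero_le _)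
    set w₁ : Fin (d+2) → ℝ := fun i => |w₀ i| with hw₁
    have hw₁dot : w₁ ⬝ᵥ w₁ = w₀ ⬝ᵥ w₀ := by
      unfold dotProduct
      exact Finset.sum_congr rfl fun i _ => by
        rw [hw₁]; simp only; exact abs_mul_abs_self (w₀ i)
    have hcmp : w₀ ⬝ᵥ A.mulVec w₀ ≤ w₁ ⬝ᵥ A.mulVec w₁ := by
      rw [dot_mulVec_double, dot_mulVec_double]
      refine Finset.sum_le_sum fun i _ => Finset.sum_le_sum fun j _ => ?_
      rw [hw₁]
      simp only
      calc w₀ i * A i j * w₀ j ≤ |w₀ i * A i j * w₀ j| := le_abs_self _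
        _ = |w₀ i| * A i j * |w₀ j| := by
            rw [abs_mul, abs_mul, abs_of_nonneg (hAnn i j)]
    have hlow : θ * (w₁ ⬝ᵥ w₁) ≤ w₁ ⬝ᵥ A.mulVec w₁ := by
      have h1 : w₀ ⬝ᵥ A.mulVec w₀ = θ * (w₀ ⬝ᵥ w₀) := by
        rw [hAw₀, dotProduct_smul, smul_eq_mul]
      rw [hw₁dot, ← h1]
      exact hcmp
    have hup : w₁ ⬝ᵥ A.mulVec w₁ ≤ θ * (w₁ ⬝ᵥ w₁) := rayleigh_le hA θ hall w₁
    have heq : w₁ ⬝ᵥ A.mulVec w₁ = θ * (w₁ ⬝ᵥ w₁) := le_antisymm hup hlow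
    have hAw₁ : A.mulVec w₁ = θ • w₁ := eigen_of_rayleigh_eq hA θ hall w₁ heq
    -- coefficient analysis
    have hczero : ∀ (w : Fin (d+2) → ℝ), A.mulVec w = θ • w →
        ∀ j', j' ≠ σ 0 → coef hA w j' = 0 := by
      intro w hw j' hj'
      have h1 : coef hA (A.mulVec w) j' = hA.eigenvalues j' * coef hA w j' :=
        coef_mulVec hA w j'
      have h2 : coef hA (θ • w) j' = θ * coef hA w j' := by
        simp only [coef, Pi.smul_apply, smul_eq_mul, Finset.mul_sum]
        exact Finset.sum_congr rfl fun l _ => by ring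
      rw [hw, h2] at h1
      by_contra hc
      have h3 : hA.eigenvalues j' = θ := by
        have := mul_right_cancel₀ hc h1.symm
        exact this
      exact hj' (hidx j' h3)
    have hexp : ∀ (w : Fin (d+2) → ℝ), A.mulVec w = θ • w →
        ∀ i, w i = coef hA w (σ 0) * hA.eigenvectorBasis (σ 0) i := by
      intro w hw i
      rw [evec_expand hA w i]
      rw [Finset.sum_eq_single (σ 0) (fun j _ hj => by rw [hczero w hw j hj]; ring)
        (fun h => absurd (Finset.mem_univ _) h)]
    set s := ∑ i, hA.eigenvectorBasis (σ 0) i with hs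
    have hc₀ne : coef hA w₀ (σ 0) ≠ 0 := by
      intro hc
      apply hw₀ne
      funext i
      rw [hexp w₀ hAw₀ i, hc, Pi.zero_apply]; ring
    have hs0 : s = 0 := by
      have h1 : coef hA w₀ (σ 0) * s = 0 := by
        rw [← hw₀sum, hs, Finset.mul_sum]
        exact Finset.sum_congr rfl fun i _ => (hexp w₀ hAw₀ i).symm
      rcases mul_eq_zero.mp h1 with h | h
      · exact absurd h hc₀ne
      · exact h
    have hw₁sum : ∑ i, w₁ i = 0 := by
      have h1 : ∑ i, w₁ i = coef hA w₁ (σ 0) * s := by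
        rw [hs, Finset.mul_sum]
        exact Finset.sum_congr rfl fun i _ => hexp w₁ hAw₁ i
      rw [h1, hs0, mul_zero]
    have hallzero : ∀ i, w₁ i = 0 := by
      have hnn : ∀ i ∈ univ, (0:ℝ) ≤ w₁ i := fun i _ => by rw [hw₁]; exact abs_nonneg _
      intro i
      exact (Finset.sum_eq_zero_iff_of_nonneg hnn).mp hw₁sum i (Finset.mem_univ i)
    apply hw₀ne
    funext i
    have := hallzero i
    rw [hw₁] at this
    simpa using this
  have hθμ : θ = μ 1 := le_antisymm hθle hθge
  constructor
  · intro w hw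
    show 0 ≤ μ 1 * (w ⬝ᵥ w) - w ⬝ᵥ A.mulVec w
    have h1 := hineq w hw
    rw [← hθμ, hθ]
    have h2 : (1/t) * (w ⬝ᵥ w) - w ⬝ᵥ A.mulVec w
        = (1/t) * ((w ⬝ᵥ w) - t * (w ⬝ᵥ A.mulVec w)) := by
      field_simp
    rw [h2]
    have h3 : 0 ≤ (w ⬝ᵥ w) - t * (w ⬝ᵥ A.mulVec w) := by linarith
    exact mul_nonneg (by positivity) h3
  · intro w hw heq0
    have heq0' : μ 1 * (w ⬝ᵥ w) - w ⬝ᵥ A.mulVec w = 0 := heq0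
    have hdot0 : w ⬝ᵥ M.mulVec w = 0 := by
      rw [hMdot w, hw]
      have h1 : w ⬝ᵥ A.mulVec w = μ 1 * (w ⬝ᵥ w) := by linarith
      rw [h1, ← hθμ, hθ]
      field_simp
      ring
    have hz : ∑ i, w i • q i = 0 := by
      have h1 := hdotGram w
      rw [hdot0] at h1
      exact inner_self_eq_zero.mp h1.symm
    have h2 := hAeig w hw (hMker w hz)
    show A.mulVec w = μ 1 • w
    rw [h2, hθμ]

-- === bwd.lean ===

noncomputable section

set_option maxHeartbeats 2000000 in
theorem backward_dir (d : ℕ) (G : SimpleGraph (Fin (d+2))) [DecidableRel G.Adj]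
    (hG : ¬ IsCompleteMultipartite G)
    (hA : (G.adjMatrix ℝ).IsHermitian)
    (μ : Fin (d+2) → ℝ) (hmono : Antitone μ)
    (σ : Equiv.Perm (Fin (d+2))) (hμ : μ = hA.eigenvalues ∘ σ)
    (h1 : ∀ w : Fin (d+2) → ℝ, (∑ i, w i) = 0 →
        0 ≤ μ 1 * (w ⬝ᵥ w) - w ⬝ᵥ (G.adjMatrix ℝ).mulVec w)
    (h2 : ∀ w : Fin (d+2) → ℝ, (∑ i, w i) = 0 →
        μ 1 * (w ⬝ᵥ w) - w ⬝ᵥ (G.adjMatrix ℝ).mulVec w = 0 →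
        (G.adjMatrix ℝ).mulVec w = μ 1 • w) :
    Spherical (d+2) d G := by
  set A := G.adjMatrix ℝ with hAdef
  set lam := μ 1 with hlam
  have hAapp : ∀ i j, A i j = if G.Adj i j then (1:ℝ) else 0 := by
    intro i j; rw [hAdef]; simp [SimpleGraph.adjMatrix_apply]
  have hAnn : ∀ i j, 0 ≤ A i j := by
    intro i j; rw [hAapp]; split <;> norm_num
  have hAsymm : ∀ i j, A i j = A j i := by
    intro i j; rw [hAapp, hAapp]
    by_cases h : G.Adj i j
    · rw [if_pos h, if_pos (G.adj_symm h)]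
    · rw [if_neg h, if_neg (fun hc => h (G.adj_symm hc))]
  have hAdiag : ∀ i, A i i = 0 := by
    intro i; rw [hAapp, if_neg (G.irrefl)]
  -- the triple
  obtain ⟨a, b, c, hab, hac, hbc, hane, hbne⟩ := exists_triple G hG
  have habne : a ≠ b := G.ne_of_adj hab
  -- lam > 0
  have hlampos : 0 < lam := by
    set w : Fin (d+2) → ℝ := (Pi.single a 1 : Fin (d+2) → ℝ) + (Pi.single b 1 : Fin (d+2) → ℝ) - (2:ℝ) • (Pi.single c 1 : Fin (d+2) → ℝ) with hw
    have hwsum : ∑ i, w i = 0 := by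
      rw [hw]
      simp only [Pi.add_apply, Pi.sub_apply, Pi.smul_apply, smul_eq_mul]
      rw [Finset.sum_sub_distrib, Finset.sum_add_distrib, ← Finset.mul_sum]
      first
      | (simp [Finset.sum_pi_single']; norm_num)
      | simp [Finset.sum_pi_single']
    have hdotz : ∀ z : Fin (d+2) → ℝ, w ⬝ᵥ z = z a + z b - 2 * z c := by
      intro z
      rw [hw, sub_dotProduct, add_dotProduct, smul_dotProduct,
        single_dotProduct, single_dotProduct, single_dotProduct]
      first
      | (simp; ring)
      | simp
      | ring
    have hwa : w a = 1 := by
      rw [hw]; simp [Pi.single_apply, habne, hane]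
    have hwb : w b = 1 := by
      rw [hw]; simp [Pi.single_apply, Ne.symm habne, hbne]
    have hwc : w c = -2 := by
      rw [hw]; simp [Pi.single_apply, Ne.symm hane, Ne.symm hbne]
    have hww : w ⬝ᵥ w = 6 := by
      rw [dotProduct_comm, hdotz w, hwa, hwb, hwc]; norm_num
    have hAw : ∀ x, (A.mulVec w) x = A x a + A x b - 2 * A x c := by
      intro x
      show (A x) ⬝ᵥ w = _
      rw [dotProduct_comm, hdotz (A x)]
    have hwAw : w ⬝ᵥ A.mulVec w = 2 := by
      rw [hdotz (A.mulVec w), hAw, hAw, hAw]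
      rw [hAdiag a, hAdiag b, hAdiag c]
      rw [show A a b = 1 from by rw [hAapp, if_pos hab]]
      rw [show A b a = 1 from by rw [hAapp, if_pos (G.adj_symm hab)]]
      rw [show A a c = 0 from by rw [hAapp, if_neg hac]]
      rw [show A c a = 0 from by rw [hAapp, if_neg (fun h => hac (G.adj_symm h))]]
      rw [show A b c = 0 from by rw [hAapp, if_neg hbc]]
      rw [show A c b = 0 from by rw [hAapp, if_neg (fun h => hbc (G.adj_symm h))]]
      norm_num
    have := h1 w hwsum
    rw [hww, hwAw] at this
    linarith
  set t : ℝ := 1/lam with ht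
  have htpos : 0 < t := by rw [ht]; positivity
  have htlam : t * lam = 1 := by rw [ht]; field_simp
  -- the eigenvector w₀
  obtain ⟨w₀, hw₀sum, hw₀pos, hw₀ray⟩ := exists_perp_vec hA μ hmono σ hμ
  have hray2 : lam * (w₀ ⬝ᵥ w₀) ≤ w₀ ⬝ᵥ A.mulVec w₀ := hw₀ray
  have hge := h1 w₀ hw₀sum
  have heq0 : lam * (w₀ ⬝ᵥ w₀) - w₀ ⬝ᵥ A.mulVec w₀ = 0 := le_antisymm (by linarith) hge
  have hAw₀ : A.mulVec w₀ = lam • w₀ := h2 w₀ hw₀sum heq0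
  have hw₀ne : w₀ ≠ 0 := by
    intro hzero
    rw [hzero] at hw₀pos
    simp [dotProduct] at hw₀pos
  -- the matrix B
  set B : Matrix (Fin (d+2)) (Fin (d+2)) ℝ :=
    Matrix.of (fun i j => (if i = j then (1:ℝ) else 0) - 1 - t * A i j) with hB
  have hBapp : ∀ i j, B i j = (if i = j then (1:ℝ) else 0) - 1 - t * A i j := by
    intro i j; rw [hB]; rfl
  have hBmul : ∀ (z : Fin (d+2) → ℝ) i, (B.mulVec z) i
      = z i - (∑ j, z j) - t * (A.mulVec z) i := by
    intro z i
    show ∑ j, B i j * z j = _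
    have hsummand : ∀ j, B i j * z j
        = (if j = i then z j else 0) - z j - t * (A i j * z j) := by
      intro j
      rw [hBapp]
      rcases eq_or_ne i j with rfl | hij
      · rw [if_pos rfl, if_pos rfl]; ring
      · rw [if_neg hij, if_neg (Ne.symm hij)]; ring
    rw [Finset.sum_congr rfl fun j _ => hsummand j]
    rw [Finset.sum_sub_distrib, Finset.sum_sub_distrib, ← Finset.mul_sum,
      Finset.sum_ite_eq' univ i z]
    have : (A.mulVec z) i = ∑ j, A i j * z j := rfl
    rw [this]
    simp
  have hBsymT : Bᵀ = B := by
    ext i j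
    show B j i = B i j
    rw [hBapp, hBapp, hAsymm j i]
    rcases eq_or_ne i j with rfl | hij
    · rfl
    · rw [if_neg hij, if_neg (Ne.symm hij)]
  have hBdsym : ∀ x y : Fin (d+2) → ℝ, x ⬝ᵥ B.mulVec y = y ⬝ᵥ B.mulVec x := by
    intro x y
    rw [Matrix.dotProduct_mulVec, ← Matrix.mulVec_transpose, hBsymT, dotProduct_comm]
  have hBB : ∀ z : Fin (d+2) → ℝ, (∑ i, z i) = 0 → ∀ i,
      (B.mulVec z) i = t * (lam * z i - (A.mulVec z) i) := by
    intro z hz i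
    rw [hBmul z i, hz]
    have : t * lam * z i = z i := by rw [htlam]; ring
    nlinarith [this]
  have hBdot : ∀ z : Fin (d+2) → ℝ, (∑ i, z i) = 0 →
      z ⬝ᵥ B.mulVec z = t * (lam * (z ⬝ᵥ z) - z ⬝ᵥ A.mulVec z) := by
    intro z hz
    show ∑ i, z i * (B.mulVec z) i = _
    rw [Finset.sum_congr rfl fun i _ => by rw [hBB z hz i]]
    have h3 : ∀ i, z i * (t * (lam * z i - A.mulVec z i))
        = (t*lam) * (z i * z i) - t * (z i * A.mulVec z i) := fun i => by ring
    rw [Finset.sum_congr rfl fun i _ => h3 i, Finset.sum_sub_distrib,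
      ← Finset.mul_sum, ← Finset.mul_sum]
    have h4 : z ⬝ᵥ z = ∑ i, z i * z i := rfl
    have h5 : z ⬝ᵥ A.mulVec z = ∑ i, z i * A.mulVec z i := rfl
    rw [h4, h5]
    ring
  have hBpsd : ∀ z : Fin (d+2) → ℝ, (∑ i, z i) = 0 → 0 ≤ z ⬝ᵥ B.mulVec z := by
    intro z hz
    rw [hBdot z hz]
    have := h1 z hz
    exact mul_nonneg htpos.le (by linarith)
  have hBker0 : ∀ z : Fin (d+2) → ℝ, (∑ i, z i) = 0 → z ⬝ᵥ B.mulVec z = 0 →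
      B.mulVec z = 0 := by
    intro z hz hd
    rw [hBdot z hz] at hd
    have hX : lam * (z ⬝ᵥ z) - z ⬝ᵥ A.mulVec z = 0 := by
      rcases mul_eq_zero.mp hd with h | h
      · exact absurd h (ne_of_gt htpos)
      · exact h
    have hAz : A.mulVec z = lam • z := by
      apply h2 z hz
      exact hX
    funext i
    rw [Pi.zero_apply, hBB z hz i, hAz, Pi.smul_apply, smul_eq_mul]
    ring
  -- ones vector negativity
  set ones : Fin (d+2) → ℝ := fun _ => 1 with hones
  have honesum : ∑ i : Fin (d+2), ones i = (d:ℝ)+2 := by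
    rw [hones]
    rw [Finset.sum_const, card_univ, Fintype.card_fin]
    push_cast
    ring
  have honesB : ones ⬝ᵥ B.mulVec ones ≤ ((d:ℝ)+2) - ((d:ℝ)+2)^2 := by
    show ∑ i, ones i * (B.mulVec ones) i ≤ _
    have hle : ∀ i : Fin (d+2), ones i * (B.mulVec ones) i ≤ 1 - ((d:ℝ)+2) := by
      intro i
      rw [hBmul ones i, honesum]
      have hAnn2 : 0 ≤ (A.mulVec ones) i := by
        show 0 ≤ ∑ j, A i j * ones j
        exact Finset.sum_nonneg fun j _ => by
          rw [hones]; simpa using hAnn i j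
      rw [hones]
      simp only
      nlinarith [mul_nonneg htpos.le hAnn2]
    calc ∑ i, ones i * (B.mulVec ones) i ≤ ∑ _i : Fin (d+2), (1 - ((d:ℝ)+2)) :=
          Finset.sum_le_sum fun i _ => hle i
      _ = ((d:ℝ)+2) * (1 - ((d:ℝ)+2)) := by
          rw [Finset.sum_const, card_univ, Fintype.card_fin]
          push_cast [nsmul_eq_mul]
          ring
      _ = ((d:ℝ)+2) - ((d:ℝ)+2)^2 := by ring
  have hnneg : ((d:ℝ)+2) - ((d:ℝ)+2)^2 < 0 := by
    have hd0 : (0:ℝ) ≤ (d:ℝ) := Nat.cast_nonneg d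
    nlinarith
  -- kernel of B is inside the hyperplane
  have hkerB : ∀ z : Fin (d+2) → ℝ, B.mulVec z = 0 → ∑ i, z i = 0 := by
    intro z hz
    by_contra hne
    set s := ∑ i, z i with hs
    set z' : Fin (d+2) → ℝ := s⁻¹ • z with hz'
    have hz'sum : ∑ i, z' i = 1 := by
      rw [hz']
      simp only [Pi.smul_apply, smul_eq_mul]
      rw [← Finset.mul_sum, ← hs, inv_mul_cancel₀ hne]
    have hBz' : B.mulVec z' = 0 := by
      rw [hz', mulVec_smul, hz]; simp
    clear_value z'
    set u : Fin (d+2) → ℝ := ones - ((d:ℝ)+2) • z' with hu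
    have husum : ∑ i, u i = 0 := by
      rw [hu]
      simp only [Pi.sub_apply, Pi.smul_apply, smul_eq_mul]
      rw [Finset.sum_sub_distrib, ← Finset.mul_sum, hz'sum, honesum]
      ring
    have hone_eq : ones = u + ((d:ℝ)+2) • z' := by rw [hu]; abel
    clear_value u
    have hexp : ones ⬝ᵥ B.mulVec ones = u ⬝ᵥ B.mulVec u := by
      rw [hone_eq, mulVec_add, mulVec_smul, hBz', smul_zero, add_zero,
        add_dotProduct, smul_dotProduct]
      have hzu : z' ⬝ᵥ B.mulVec u = u ⬝ᵥ B.mulVec z' := hBdsym z' u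
      rw [hzu, hBz']
      simp
    have := hBpsd u husum
    rw [← hexp] at this
    linarith
  -- solve B v = ones
  have hBherm : B.IsHermitian := by
    show Bᴴ = B
    rw [Matrix.conjTranspose_eq_transpose_of_trivial, hBsymT]
  obtain ⟨v₀, hv₀⟩ := exists_preimage_ones B hBherm hkerB
  set s := ∑ i, v₀ i with hs
  have hsne : s ≠ 0 := by
    intro hs0
    have hd : v₀ ⬝ᵥ B.mulVec v₀ = 0 := by
      rw [hv₀]
      show ∑ i, v₀ i * 1 = 0
      simp only [mul_one]
      rw [← hs, hs0]
    have := hBker0 v₀ (by rw [← hs, hs0]) hd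
    rw [hv₀] at this
    have := congrFun this ⟨0, by omega⟩
    norm_num at this
  set v : Fin (d+2) → ℝ := s⁻¹ • v₀ with hv
  have hvsum : ∑ i, v i = 1 := by
    rw [hv]
    simp only [Pi.smul_apply, smul_eq_mul]
    rw [← Finset.mul_sum, ← hs, inv_mul_cancel₀ hsne]
  set cst : ℝ := s⁻¹ with hcst
  have hBv : B.mulVec v = fun _ => cst := by
    rw [hv, mulVec_smul, hv₀]
    funext i
    simp [hcst]
  have hvBv : v ⬝ᵥ B.mulVec v = cst := by
    rw [hBv]
    show ∑ i, v i * cst = cst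
    rw [← Finset.sum_mul, hvsum, one_mul]
  clear_value v cst
  -- cst < 0
  have hcneg : cst < 0 := by
    set u : Fin (d+2) → ℝ := ones - ((d:ℝ)+2) • v with hu
    have husum : ∑ i, u i = 0 := by
      rw [hu]
      simp only [Pi.sub_apply, Pi.smul_apply, smul_eq_mul]
      rw [Finset.sum_sub_distrib, ← Finset.mul_sum, hvsum, honesum]
      ring
    have hone_eq : ones = u + ((d:ℝ)+2) • v := by rw [hu]; abel
    clear_value u
    have hudot : u ⬝ᵥ B.mulVec v = 0 := by
      rw [hBv]
      show ∑ i, u i * cst = 0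
      rw [← Finset.sum_mul, husum, zero_mul]
    have hexp : ones ⬝ᵥ B.mulVec ones = u ⬝ᵥ B.mulVec u + ((d:ℝ)+2)^2 * cst := by
      rw [hone_eq, mulVec_add, mulVec_smul, dotProduct_add, add_dotProduct,
        add_dotProduct, dotProduct_smul, smul_dotProduct, smul_dotProduct]
      have e1 : u ⬝ᵥ B.mulVec v = 0 := hudot
      have e2 : v ⬝ᵥ B.mulVec u = 0 := (hBdsym v u).trans hudot
      simp only [dotProduct_smul, smul_eq_mul]
      rw [e1, e2, hvBv]
      ring
    have hu2 := hBpsd u husum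
    have hn2 : 0 < ((d:ℝ)+2)^2 := by positivity
    nlinarith [honesB, hnneg, hexp, hu2]
  set r2 : ℝ := -cst/2 with hr2
  have hr2pos : 0 < r2 := by rw [hr2]; linarith
  -- the Gram candidate M
  set M : Matrix (Fin (d+2)) (Fin (d+2)) ℝ := Matrix.of (fun i j => r2 + B i j / 2) with hM
  have hMapp : ∀ i j, M i j = r2 + B i j / 2 := fun i j => rfl
  have hMmul : ∀ (z : Fin (d+2) → ℝ) i, (M.mulVec z) i
      = r2 * (∑ j, z j) + (B.mulVec z) i / 2 := by
    intro z i
    show ∑ j, M i j * z j = _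
    have hsummand : ∀ j, M i j * z j = r2 * z j + (B i j * z j) / 2 := by
      intro j; rw [hMapp]; ring
    rw [Finset.sum_congr rfl fun j _ => hsummand j]
    rw [Finset.sum_add_distrib, ← Finset.mul_sum]
    have : (B.mulVec z) i = ∑ j, B i j * z j := rfl
    rw [this, ← Finset.sum_div]
  have hMdotid : ∀ z : Fin (d+2) → ℝ, z ⬝ᵥ M.mulVec z
      = r2 * (∑ i, z i)^2 + (z ⬝ᵥ B.mulVec z) / 2 := by
    intro z
    show ∑ i, z i * (M.mulVec z) i = _
    rw [Finset.sum_congr rfl fun i _ => by rw [hMmul z i]]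
    have h3 : ∀ i, z i * (r2 * (∑ j, z j) + (B.mulVec z) i / 2)
        = (r2 * (∑ j, z j)) * z i + (z i * (B.mulVec z) i) / 2 := fun i => by ring
    rw [Finset.sum_congr rfl fun i _ => h3 i, Finset.sum_add_distrib,
      ← Finset.mul_sum, ← Finset.sum_div]
    have h4 : z ⬝ᵥ B.mulVec z = ∑ i, z i * (B.mulVec z) i := rfl
    rw [h4]
    ring
  have hMv : M.mulVec v = 0 := by
    funext i
    rw [hMmul v i, hvsum, hBv]
    simp only [Pi.zero_apply]
    rw [hr2]
    ring
  have hBw₀ : B.mulVec w₀ = 0 := by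
    funext i
    rw [Pi.zero_apply, hBB w₀ hw₀sum i, hAw₀, Pi.smul_apply, smul_eq_mul]
    ring
  have hMw₀ : M.mulVec w₀ = 0 := by
    funext i
    rw [hMmul w₀ i, hw₀sum, hBw₀]
    simp
  have hMherm : M.IsHermitian := by
    show Mᴴ = M
    rw [Matrix.conjTranspose_eq_transpose_of_trivial]
    ext i j
    show M j i = M i j
    rw [hMapp, hMapp]
    have hBji : B j i = B i j := congrFun (congrFun hBsymT i) j
    rw [hBji]
  have hMdsym : ∀ x y : Fin (d+2) → ℝ, x ⬝ᵥ M.mulVec x ≥ 0 → True := fun _ _ _ => trivial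
  have hMpsd : ∀ x : Fin (d+2) → ℝ, 0 ≤ x ⬝ᵥ M.mulVec x := by
    intro x
    set sx := ∑ i, x i with hsx
    set u : Fin (d+2) → ℝ := x - sx • v with hu
    have husum : ∑ i, u i = 0 := by
      rw [hu]
      simp only [Pi.sub_apply, Pi.smul_apply, smul_eq_mul]
      rw [Finset.sum_sub_distrib, ← Finset.mul_sum, hvsum, ← hsx]
      ring
    have hxeq : x = u + sx • v := by rw [hu]; abel
    clear_value u
    have hMu : u ⬝ᵥ M.mulVec u = (u ⬝ᵥ B.mulVec u)/2 := by
      rw [hMdotid u, husum]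
      ring
    have hMTsym : Mᵀ = M := by
      rw [← Matrix.conjTranspose_eq_transpose_of_trivial]; exact hMherm
    have hMdsym2 : ∀ x' y' : Fin (d+2) → ℝ, x' ⬝ᵥ M.mulVec y' = y' ⬝ᵥ M.mulVec x' := by
      intro x' y'
      rw [Matrix.dotProduct_mulVec, ← Matrix.mulVec_transpose, hMTsym, dotProduct_comm]
    rw [hxeq, mulVec_add, mulVec_smul, hMv, smul_zero, add_zero, add_dotProduct,
      smul_dotProduct]
    have e2 : v ⬝ᵥ M.mulVec u = u ⬝ᵥ M.mulVec v := hMdsym2 v u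
    rw [e2, hMv]
    simp only [dotProduct_zero, smul_eq_mul, mul_zero, add_zero]
    rw [hMu]
    have := hBpsd u husum
    linarith
  -- realize the Gram matrix
  obtain ⟨p, hp⟩ := gram_realize M hMherm hMpsd w₀ v hMw₀ hMv hw₀sum hvsum hw₀ne
  -- distances
  set k : ℝ := Real.sqrt (1 + t) with hk
  have hk2 : k^2 = 1 + t := Real.sq_sqrt (by linarith)
  have hk1 : 1 < k := by
    rw [hk]
    have : (1:ℝ) = Real.sqrt 1 := Real.sqrt_one.symm
    rw [this]
    exact Real.sqrt_lt_sqrt (by norm_num) (by linarith)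
  have hMdiag : ∀ i, M i i = r2 := by
    intro i
    rw [hMapp, hBapp, hAdiag]
    simp
  have hdist2 : ∀ i j, (dist (p i) (p j))^2 = M i i - 2 * M i j + M j j := by
    intro i j
    rw [dist_eq_norm, norm_sub_sq_real]
    rw [← real_inner_self_eq_norm_sq, ← real_inner_self_eq_norm_sq]
    rw [hp i i, hp i j, hp j j]
  have hdistoff : ∀ i j, i ≠ j → dist (p i) (p j) = Real.sqrt (1 + t * A i j) := by
    intro i j hij
    have h3 : (dist (p i) (p j))^2 = 1 + t * A i j := by
      rw [hdist2 i j, hMdiag i, hMdiag j, hMapp, hBapp, if_neg hij]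
      ring
    rw [← h3, Real.sqrt_sq dist_nonneg]
  refine ⟨k, p, 0, Real.sqrt r2, ⟨k, 1, hk1, one_pos, (div_one k).symm, ?_, ?_, ⟨a, b, hab⟩,
    ⟨a, c, hane, hac⟩⟩, ?_⟩
  · intro i j hadj
    rw [hdistoff i j (G.ne_of_adj hadj)]
    rw [show A i j = 1 from by rw [hAapp, if_pos hadj]]
    rw [hk]
    norm_num
  · intro i j hij hnadj
    rw [hdistoff i j hij]
    rw [show A i j = 0 from by rw [hAapp, if_neg hnadj]]
    norm_num
  · intro i
    rw [dist_zero_right, norm_eq_sqrt_real_inner, hp i i, hMdiag i]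


/-- **Lemma 14.** Let `G` on `d+2` vertices be not complete multipartite and
`B̄ = λ₂·I - A_G`. Then `G` is spherical in `ℝ^d` iff `wᵀ B̄ w ≥ 0` for every
`w ∈ 𝟙^⊥` and every `w ∈ 𝟙^⊥` with `wᵀ B̄ w = 0` satisfies `B̄ w = 0`. -/
theorem stmt16 (d : ℕ) (G : SimpleGraph (Fin (d+2))) [DecidableRel G.Adj]
    (hG : ¬ IsCompleteMultipartite G)
    (hA : (G.adjMatrix ℝ).IsHermitian)
    (μ : Fin (d+2) → ℝ) (hmono : Antitone μ)
    (hperm : ∃ σ : Equiv.Perm (Fin (d+2)), μ = hA.eigenvalues ∘ σ)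
    (Bbar : Matrix (Fin (d+2)) (Fin (d+2)) ℝ)
    (hB : Bbar = μ 1 • (1 : Matrix (Fin (d+2)) (Fin (d+2)) ℝ) - G.adjMatrix ℝ) :
    Spherical (d+2) d G ↔
      ((∀ w : Fin (d+2) → ℝ, (∑ i, w i) = 0 → 0 ≤ w ⬝ᵥ Bbar.mulVec w) ∧
       (∀ w : Fin (d+2) → ℝ, (∑ i, w i) = 0 → w ⬝ᵥ Bbar.mulVec w = 0 →
          Bbar.mulVec w = 0)) := by
  obtain ⟨σ, hσ⟩ := hperm
  have hBf : ∀ w : Fin (d+2) → ℝ,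
      Bbar.mulVec w = μ 1 • w - (G.adjMatrix ℝ).mulVec w := by
    intro w
    rw [hB, Matrix.sub_mulVec, Matrix.smul_mulVec, Matrix.one_mulVec]
  have hBdot : ∀ w : Fin (d+2) → ℝ, w ⬝ᵥ Bbar.mulVec w
      = μ 1 * (w ⬝ᵥ w) - w ⬝ᵥ (G.adjMatrix ℝ).mulVec w := by
    intro w
    rw [hBf, dotProduct_sub, dotProduct_smul, smul_eq_mul]
  constructor
  · intro hsph
    obtain ⟨hc1, hc2⟩ := forward_dir d G hA μ hmono σ hσ hsph
    constructor
    · intro w hw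
      rw [hBdot w]
      exact hc1 w hw
    · intro w hw h0
      rw [hBf w, hc2 w hw (by rw [← hBdot w]; exact h0)]
      simp
  · rintro ⟨hc1, hc2⟩
    apply backward_dir d G hG hA μ hmono σ hσ
    · intro w hw
      have := hc1 w hw
      rw [hBdot w] at this
      exact this
    · intro w hw h0
      have h3 := hc2 w hw (by rw [hBdot w]; exact h0)
      rw [hBf w] at h3
      exact (sub_eq_zero.mp h3).symm
end
end
end
end
end
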